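/- Let T>1, let k be a positive integer, let c_i>0, and let real constants a_{ii}^{i,αβγ} (α,β,γ=0,1,2) satisfy the null condition Σ_{α,β,γ=0}^2 a_{ii}^{i,αβγ}X_αX_βX_γ = 0 for all X∈ℝ³ with X₀²=c_i²(X₁²+X₂²). Then there exists a constant C₂>0, independent of T, such that for all smooth functions v^i, w^i on ℝ²×[0,T) and all (x,t) with x≠0: |Σ_{α,β,γ=0}^2 a_{ii}^{i,αβγ}∂_γ v^i(x,t)∂_α∂_β w^i(x,t)|_k ≤ C₂ Σ_{|b+c|≤k+1} ( |Z^i Γ^b v^i(x,t)||Γ^c ∂² w^i(x,t)| + |Γ^b ∂ v^i(x,t)||Z^i Γ^c ∂ w^i(x,t)| ). -/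

import Mathlib

open Real MeasureTheory Filter

noncomputable section

/-- A space-time point `p = (x₁, x₂, t)`. -/
abbrev Pt : Type := ℝ × ℝ × ℝ

def dir3 : Fin 3 → Pt
  | 0 => (0, 0, 1)
  | 1 => (1, 0, 0)
  | 2 => (0, 1, 0)

/-- Partial derivative: `pd 0` is `∂_t`, `pd 1` is `∂_{x₁}`, `pd 2` is `∂_{x₂}`. -/
def pd (α : Fin 3) (v : Pt → ℝ) : Pt → ℝ := fun p => fderiv ℝ v p (dir3 α)

/-- The vector fields `Γ₀ = ∂_t, Γ₁ = ∂₁, Γ₂ = ∂₂, Γ₃ = Ω = x₁∂₂ − x₂∂₁,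
`Γ₄ = S = t∂_t + x₁∂₁ + x₂∂₂`. -/
def Gam : Fin 5 → (Pt → ℝ) → (Pt → ℝ)
  | 0 => pd 0
  | 1 => pd 1
  | 2 => pd 2
  | 3 => fun v p => p.1 * pd 2 v p - p.2.1 * pd 1 v p
  | 4 => fun v p => p.2.2 * pd 0 v p + p.1 * pd 1 v p + p.2.1 * pd 2 v p

/-- The monomial `Γ^a = Γ₀^{a₀}Γ₁^{a₁}Γ₂^{a₂}Γ₃^{a₃}Γ₄^{a₄}`. -/
def GamPow (a : Fin 5 → ℕ) (v : Pt → ℝ) : Pt → ℝ :=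
  (Gam 0)^[a 0] ((Gam 1)^[a 1] ((Gam 2)^[a 2] ((Gam 3)^[a 3] ((Gam 4)^[a 4] v))))

/-- Multi-indices `a` of length 5 with `|a| ≤ k`. -/
def MIdx (k : ℕ) : Finset (Fin 5 → ℕ) :=
  (Finset.range (k + 1)).biUnion fun n => Finset.Nat.antidiagonalTuple 5 n

/-- The pointwise norm `|v(x,t)|_k = Σ_{|a| ≤ k} |Γ^a v(x,t)|`. -/
def ptNorm (k : ℕ) (v : Pt → ℝ) (p : Pt) : ℝ := ∑ a ∈ MIdx k, |GamPow a v p|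

/-- `|x|`, the euclidean norm of the spatial part. -/
def rad (p : Pt) : ℝ := Real.sqrt (p.1 ^ 2 + p.2.1 ^ 2)

/-- The good derivative `Z_α^i = c_i ∂_α + (x_α/|x|) ∂_t` (for `α = 1, 2`). -/
def Zd (ci : ℝ) (α : Fin 3) (v : Pt → ℝ) (p : Pt) : ℝ :=
  ci * pd α v p + ((if α = 1 then p.1 else p.2.1) / rad p) * pd 0 v p

/-- `|Z^i v| = |Z₁^i v| + |Z₂^i v|`. -/
def Znorm (ci : ℝ) (v : Pt → ℝ) (p : Pt) : ℝ := |Zd ci 1 v p| + |Zd ci 2 v p|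
/-- Pairs of multi-indices `(b, c)` with `|b| + |c| ≤ k`. -/
def pairIdx (k : ℕ) : Finset ((Fin 5 → ℕ) × (Fin 5 → ℕ)) :=
  ((MIdx k) ×ˢ (MIdx k)).filter fun bc => (∑ j, bc.1 j) + (∑ j, bc.2 j) ≤ k

/-- Triples of multi-indices `(b, c, d)` with `|b| + |c| + |d| ≤ k`. -/
def tripIdx (k : ℕ) : Finset ((Fin 5 → ℕ) × (Fin 5 → ℕ) × (Fin 5 → ℕ)) :=
  ((MIdx k) ×ˢ (MIdx k) ×ˢ (MIdx k)).filter
    fun bcd => (∑ j, bcd.1 j) + (∑ j, bcd.2.1 j) + (∑ j, bcd.2.2 j) ≤ k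

set_option linter.unusedSectionVars false

section basic

variable {s : Set Pt} (hs : IsOpen s) {v w : Pt → ℝ} {p : Pt}
include hs

theorem pd_smooth (hv : ContDiffOn ℝ (⊤ : ℕ∞) v s) (α : Fin 3) :
    ContDiffOn ℝ (⊤ : ℕ∞) (pd α v) s :=
  (hv.fderiv_of_isOpen hs (by simp)).clm_apply contDiffOn_const

theorem diffAt {F : Type*} [NormedAddCommGroup F] [NormedSpace ℝ F] {f : Pt → F}
    (hf : ContDiffOn ℝ (⊤ : ℕ∞) f s) (hp : p ∈ s) : DifferentiableAt ℝ f p :=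
  (hf.contDiffAt (hs.mem_nhds hp)).differentiableAt (by simp)

omit hs in
theorem fin5cases {P : Fin 5 → Prop} (h0 : P 0) (h1 : P 1) (h2 : P 2) (h3 : P 3) (h4 : P 4) :
    ∀ i, P i := by
  intro i; fin_cases i; exacts [h0, h1, h2, h3, h4]

omit hs in
theorem fin3cases {P : Fin 3 → Prop} (h0 : P 0) (h1 : P 1) (h2 : P 2) :
    ∀ i, P i := by
  intro i; fin_cases i; exacts [h0, h1, h2]

theorem pd_congr {f g : Pt → ℝ} (h : ∀ q ∈ s, f q = g q) (hp : p ∈ s) (α : Fin 3) :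
    pd α f p = pd α g p := by
  have : f =ᶠ[nhds p] g := Filter.eventually_of_mem (hs.mem_nhds hp) h
  simp only [pd, this.fderiv_eq]

theorem pd_comm (hv : ContDiffOn ℝ (⊤ : ℕ∞) v s) (hp : p ∈ s) (α β : Fin 3) :
    pd α (pd β v) p = pd β (pd α v) p := by
  have hsym : IsSymmSndFDerivAt ℝ v p :=
    (hv.contDiffAt (hs.mem_nhds hp)).isSymmSndFDerivAt (by simp; exact WithTop.coe_le_coe.mpr (le_top : (2:ℕ∞) ≤ ⊤))
  have hd : DifferentiableAt ℝ (fderiv ℝ v) p :=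
    diffAt hs (hv.fderiv_of_isOpen hs (by simp)) hp
  have key : ∀ μ ν : Fin 3, pd μ (pd ν v) p = fderiv ℝ (fderiv ℝ v) p (dir3 μ) (dir3 ν) := by
    intro μ ν
    have : pd ν v = fun q => (fderiv ℝ v q) (dir3 ν) := rfl
    rw [pd, this]
    rw [fderiv_clm_apply hd (differentiableAt_const _)]
    simp
  rw [key, key, hsym]

omit hs in
theorem pd_finsum {ι : Type*} [Fintype ι] (F : ι → Pt → ℝ)
    (hF : ∀ j, DifferentiableAt ℝ (F j) p) (α : Fin 3) :
    pd α (fun q => ∑ j, F j q) p = ∑ j, pd α (F j) p := by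
  simp only [pd]
  rw [fderiv_fun_sum (fun j _ => hF j)]
  simp

omit hs in
theorem pd_mul {f g : Pt → ℝ} (hf : DifferentiableAt ℝ f p) (hg : DifferentiableAt ℝ g p)
    (α : Fin 3) : pd α (fun q => f q * g q) p = pd α f p * g p + f p * pd α g p := by
  simp only [pd]
  rw [fderiv_fun_mul hf hg]
  simp only [ContinuousLinearMap.add_apply, ContinuousLinearMap.smul_apply, smul_eq_mul]
  ring

omit hs in
theorem pd_const_mul {f : Pt → ℝ} (hf : DifferentiableAt ℝ f p) (c : ℝ) (α : Fin 3) :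
    pd α (fun q => c * f q) p = c * pd α f p := by
  simp only [pd]
  rw [fderiv_const_mul hf]
  simp

omit hs in
theorem pd_coord1 (α : Fin 3) : pd α (fun q : Pt => q.1) p = if α = 1 then 1 else 0 := by
  have : pd α (fun q : Pt => q.1) p = (dir3 α).1 := by
    simp only [pd]
    rw [(hasFDerivAt_fst (𝕜 := ℝ) (p := p)).fderiv]
    rfl
  rw [this]
  fin_cases α <;> simp [dir3]

omit hs in
theorem pd_coord2 (α : Fin 3) : pd α (fun q : Pt => q.2.1) p = if α = 2 then 1 else 0 := by
  have : pd α (fun q : Pt => q.2.1) p = (dir3 α).2.1 := by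
    simp only [pd]
    have h : HasFDerivAt (fun q : Pt => q.2.1)
        ((ContinuousLinearMap.fst ℝ ℝ ℝ).comp (ContinuousLinearMap.snd ℝ ℝ (ℝ × ℝ))) p :=
      (hasFDerivAt_fst.comp p hasFDerivAt_snd)
    rw [h.fderiv]
    rfl
  rw [this]
  fin_cases α <;> simp [dir3]

omit hs in
theorem pd_coord3 (α : Fin 3) : pd α (fun q : Pt => q.2.2) p = if α = 0 then 1 else 0 := by
  have : pd α (fun q : Pt => q.2.2) p = (dir3 α).2.2 := by
    simp only [pd]
    have h : HasFDerivAt (fun q : Pt => q.2.2)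
        ((ContinuousLinearMap.snd ℝ ℝ ℝ).comp (ContinuousLinearMap.snd ℝ ℝ (ℝ × ℝ))) p :=
      (hasFDerivAt_snd.comp p hasFDerivAt_snd)
    rw [h.fderiv]
    rfl
  rw [this]
  fin_cases α <;> simp [dir3]

end basic

section chunk2

variable {s : Set Pt} (hs : IsOpen s) {v w : Pt → ℝ} {p : Pt}
include hs

omit hs in
theorem pd_sub {f g : Pt → ℝ} (hf : DifferentiableAt ℝ f p) (hg : DifferentiableAt ℝ g p)
    (α : Fin 3) : pd α (fun q => f q - g q) p = pd α f p - pd α g p := by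
  simp only [pd]; rw [fderiv_fun_sub hf hg]; simp

omit hs in
theorem pd_add' {f g : Pt → ℝ} (hf : DifferentiableAt ℝ f p) (hg : DifferentiableAt ℝ g p)
    (α : Fin 3) : pd α (fun q => f q + g q) p = pd α f p + pd α g p := by
  simp only [pd]; rw [fderiv_fun_add hf hg]; simp

omit hs in
theorem coord1_smooth : ContDiffOn ℝ (⊤ : ℕ∞) (fun q : Pt => q.1) s := contDiff_fst.contDiffOn
omit hs in
theorem coord2_smooth : ContDiffOn ℝ (⊤ : ℕ∞) (fun q : Pt => q.2.1) s :=
  (contDiff_fst.comp contDiff_snd).contDiffOn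
omit hs in
theorem coord3_smooth : ContDiffOn ℝ (⊤ : ℕ∞) (fun q : Pt => q.2.2) s :=
  (contDiff_snd.comp contDiff_snd).contDiffOn

theorem gam_smooth (hv : ContDiffOn ℝ (⊤ : ℕ∞) v s) (i : Fin 5) : ContDiffOn ℝ (⊤ : ℕ∞) (Gam i v) s := by
  refine fin5cases (P := fun i => ContDiffOn ℝ (⊤ : ℕ∞) (Gam i v) s) ?_ ?_ ?_ ?_ ?_ i
  · beta_reduce
    exact pd_smooth hs hv 0
  · beta_reduce
    exact pd_smooth hs hv 1
  · beta_reduce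
    exact pd_smooth hs hv 2
  · exact (coord1_smooth.mul (pd_smooth hs hv 2)).sub
      (coord2_smooth.mul (pd_smooth hs hv 1))
  · exact ((coord3_smooth.mul (pd_smooth hs hv 0)).add
      (coord1_smooth.mul (pd_smooth hs hv 1))).add
      (coord2_smooth.mul (pd_smooth hs hv 2))

theorem gam_iter_smooth (hv : ContDiffOn ℝ (⊤ : ℕ∞) v s) (i : Fin 5) (n : ℕ) :
    ContDiffOn ℝ (⊤ : ℕ∞) ((Gam i)^[n] v) s := by
  induction n generalizing v with
  | zero => exact hv
  | succ n ih =>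
      rw [Function.iterate_succ_apply]
      exact ih (gam_smooth hs hv i)

theorem gamPow_smooth (hv : ContDiffOn ℝ (⊤ : ℕ∞) v s) (a : Fin 5 → ℕ) :
    ContDiffOn ℝ (⊤ : ℕ∞) (GamPow a v) s := by
  unfold GamPow
  exact gam_iter_smooth hs (gam_iter_smooth hs (gam_iter_smooth hs (gam_iter_smooth hs
    (gam_iter_smooth hs hv 4 _) 3 _) 2 _) 1 _) 0 _

theorem gam_finsum {ι : Type*} [Fintype ι] (F : ι → Pt → ℝ)
    (hF : ∀ j, ContDiffOn ℝ (⊤ : ℕ∞) (F j) s) (hp : p ∈ s) (i : Fin 5) :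
    Gam i (fun q => ∑ j, F j q) p = ∑ j, Gam i (F j) p := by
  have hd : ∀ j, DifferentiableAt ℝ (F j) p := fun j => diffAt hs (hF j) hp
  refine fin5cases (P := fun i => Gam i (fun q => ∑ j, F j q) p = ∑ j, Gam i (F j) p)
    ?_ ?_ ?_ ?_ ?_ i
  · beta_reduce
    exact pd_finsum F hd 0
  · beta_reduce
    exact pd_finsum F hd 1
  · beta_reduce
    exact pd_finsum F hd 2
  · beta_reduce
    show p.1 * pd 2 _ p - p.2.1 * pd 1 _ p = _
    rw [pd_finsum F hd 2, pd_finsum F hd 1, Finset.mul_sum, Finset.mul_sum,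
      ← Finset.sum_sub_distrib]
    rfl
  · beta_reduce
    show p.2.2 * pd 0 _ p + p.1 * pd 1 _ p + p.2.1 * pd 2 _ p = _
    rw [pd_finsum F hd 0, pd_finsum F hd 1, pd_finsum F hd 2, Finset.mul_sum, Finset.mul_sum,
      Finset.mul_sum, ← Finset.sum_add_distrib, ← Finset.sum_add_distrib]
    rfl

omit hs in
theorem gam_const_mul {f : Pt → ℝ} (hf : DifferentiableAt ℝ f p) (c : ℝ) (i : Fin 5) :
    Gam i (fun q => c * f q) p = c * Gam i f p := by
  refine fin5cases (P := fun i => Gam i (fun q => c * f q) p = c * Gam i f p) ?_ ?_ ?_ ?_ ?_ i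
  · beta_reduce
    exact pd_const_mul hf c 0
  · beta_reduce
    exact pd_const_mul hf c 1
  · beta_reduce
    exact pd_const_mul hf c 2
  · beta_reduce
    show p.1 * pd 2 _ p - p.2.1 * pd 1 _ p = _
    rw [pd_const_mul hf c 2, pd_const_mul hf c 1]
    show _ = c * (p.1 * pd 2 f p - p.2.1 * pd 1 f p); ring
  · beta_reduce
    show p.2.2 * pd 0 _ p + p.1 * pd 1 _ p + p.2.1 * pd 2 _ p = _
    rw [pd_const_mul hf c 0, pd_const_mul hf c 1, pd_const_mul hf c 2]
    show _ = c * (p.2.2 * pd 0 f p + p.1 * pd 1 f p + p.2.1 * pd 2 f p); ring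

omit hs in
theorem gam_mul {f g : Pt → ℝ} (hf : DifferentiableAt ℝ f p) (hg : DifferentiableAt ℝ g p)
    (i : Fin 5) : Gam i (fun q => f q * g q) p = Gam i f p * g p + f p * Gam i g p := by
  refine fin5cases
    (P := fun i => Gam i (fun q => f q * g q) p = Gam i f p * g p + f p * Gam i g p)
    ?_ ?_ ?_ ?_ ?_ i
  · beta_reduce
    exact pd_mul hf hg 0
  · beta_reduce
    exact pd_mul hf hg 1
  · beta_reduce
    exact pd_mul hf hg 2
  · beta_reduce
    show p.1 * pd 2 _ p - p.2.1 * pd 1 _ p = _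
    rw [pd_mul hf hg 2, pd_mul hf hg 1]
    show _ = (p.1 * pd 2 f p - p.2.1 * pd 1 f p) * g p + f p * (p.1 * pd 2 g p - p.2.1 * pd 1 g p)
    ring
  · beta_reduce
    show p.2.2 * pd 0 _ p + p.1 * pd 1 _ p + p.2.1 * pd 2 _ p = _
    rw [pd_mul hf hg 0, pd_mul hf hg 1, pd_mul hf hg 2]
    show _ = (p.2.2 * pd 0 f p + p.1 * pd 1 f p + p.2.1 * pd 2 f p) * g p
      + f p * (p.2.2 * pd 0 g p + p.1 * pd 1 g p + p.2.1 * pd 2 g p)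
    ring

/-- Commutator coefficients: `pd γ (Γ_i v) = Γ_i (pd γ v) + ∑ δ cmat i γ δ pd δ v`. -/
def cmat : Fin 5 → Fin 3 → Fin 3 → ℝ := fun i γ δ =>
  if i = 3 then (if γ = 1 ∧ δ = 2 then 1 else if γ = 2 ∧ δ = 1 then -1 else 0)
  else if i = 4 then (if γ = δ then 1 else 0) else 0

theorem pd_gam (hv : ContDiffOn ℝ (⊤ : ℕ∞) v s) (hp : p ∈ s) (i : Fin 5) (γ : Fin 3) :
    pd γ (Gam i v) p = Gam i (pd γ v) p + ∑ δ, cmat i γ δ * pd δ v p := by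
  have hd : ∀ μ : Fin 3, DifferentiableAt ℝ (pd μ v) p :=
    fun μ => diffAt hs (pd_smooth hs hv μ) hp
  have hc1 : DifferentiableAt ℝ (fun q : Pt => q.1) p := differentiable_fst.differentiableAt
  have hc2 : DifferentiableAt ℝ (fun q : Pt => q.2.1) p :=
    (differentiable_fst.comp differentiable_snd).differentiableAt
  have hc3 : DifferentiableAt ℝ (fun q : Pt => q.2.2) p :=
    (differentiable_snd.comp differentiable_snd).differentiableAt
  refine fin5cases
    (P := fun i => pd γ (Gam i v) p = Gam i (pd γ v) p + ∑ δ, cmat i γ δ * pd δ v p)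
    ?_ ?_ ?_ ?_ ?_ i
  · beta_reduce
    rw [show Gam 0 = pd 0 from rfl, pd_comm hs hv hp γ 0]
    simp [cmat, Fin.sum_univ_three]
  · beta_reduce
    rw [show Gam 1 = pd 1 from rfl, pd_comm hs hv hp γ 1]
    simp [cmat, Fin.sum_univ_three]
  · beta_reduce
    rw [show Gam 2 = pd 2 from rfl, pd_comm hs hv hp γ 2]
    simp [cmat, Fin.sum_univ_three]
  · beta_reduce
    have h3 : Gam 3 v = fun q => (fun q : Pt => q.1) q * pd 2 v q
        - (fun q : Pt => q.2.1) q * pd 1 v q := rfl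
    rw [h3, pd_sub (hc1.fun_mul (hd 2)) (hc2.fun_mul (hd 1)) γ,
      pd_mul hc1 (hd 2) γ, pd_mul hc2 (hd 1) γ, pd_coord1 γ, pd_coord2 γ,
      pd_comm hs hv hp γ 2, pd_comm hs hv hp γ 1]
    show _ = (p.1 * pd 2 (pd γ v) p - p.2.1 * pd 1 (pd γ v) p) + _
    refine fin3cases (P := fun γ => (if γ = 1 then 1 else 0) * pd 2 v p + p.1 * pd 2 (pd γ v) p
        - ((if γ = 2 then 1 else 0) * pd 1 v p + p.2.1 * pd 1 (pd γ v) p)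
        = p.1 * pd 2 (pd γ v) p - p.2.1 * pd 1 (pd γ v) p + ∑ δ, cmat 3 γ δ * pd δ v p)
      ?_ ?_ ?_ γ <;> simp [cmat, Fin.sum_univ_three] <;> ring
  · beta_reduce
    have h4 : Gam 4 v = fun q => ((fun q : Pt => q.2.2) q * pd 0 v q
        + (fun q : Pt => q.1) q * pd 1 v q) + (fun q : Pt => q.2.1) q * pd 2 v q := rfl
    rw [h4, pd_add' ((hc3.fun_mul (hd 0)).fun_add (hc1.fun_mul (hd 1))) (hc2.fun_mul (hd 2)) γ,
      pd_add' (hc3.fun_mul (hd 0)) (hc1.fun_mul (hd 1)) γ,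
      pd_mul hc3 (hd 0) γ, pd_mul hc1 (hd 1) γ, pd_mul hc2 (hd 2) γ,
      pd_coord1 γ, pd_coord2 γ, pd_coord3 γ,
      pd_comm hs hv hp γ 0, pd_comm hs hv hp γ 1,
      pd_comm hs hv hp γ 2]
    show _ = (p.2.2 * pd 0 (pd γ v) p + p.1 * pd 1 (pd γ v) p + p.2.1 * pd 2 (pd γ v) p) + _
    refine fin3cases (P := fun γ =>
        ((if γ = 0 then 1 else 0) * pd 0 v p + p.2.2 * pd 0 (pd γ v) p
          + ((if γ = 1 then 1 else 0) * pd 1 v p + p.1 * pd 1 (pd γ v) p))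
          + ((if γ = 2 then 1 else 0) * pd 2 v p + p.2.1 * pd 2 (pd γ v) p)
        = p.2.2 * pd 0 (pd γ v) p + p.1 * pd 1 (pd γ v) p + p.2.1 * pd 2 (pd γ v) p
          + ∑ δ, cmat 4 γ δ * pd δ v p) ?_ ?_ ?_ γ <;>
      simp [cmat, Fin.sum_univ_three] <;> ring

end chunk2

/-- Coefficient tensors. -/
abbrev T3 : Type := Fin 3 → Fin 3 → Fin 3 → ℝ

/-- The null condition for a coefficient tensor. -/
def NullT (ci : ℝ) (t : T3) : Prop :=
  ∀ X : Fin 3 → ℝ, (X 0) ^ 2 = ci ^ 2 * ((X 1) ^ 2 + (X 2) ^ 2) →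
    ∑ α : Fin 3, ∑ β : Fin 3, ∑ γ : Fin 3, t α β γ * X α * X β * X γ = 0

/-- The null form. -/
def NF (t : T3) (v w : Pt → ℝ) : Pt → ℝ :=
  fun p => ∑ α : Fin 3, ∑ β : Fin 3, ∑ γ : Fin 3, t α β γ * pd γ v p * pd α (pd β w) p

/-- Tensor appearing as commutator correction. -/
def rho (i : Fin 5) (t : T3) : T3 := fun α β γ =>
  -((∑ γ0, t α β γ0 * cmat i γ0 γ) + (∑ α0, t α0 β γ * cmat i α0 α)
    + (∑ β0, t α β0 γ * cmat i β0 β))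

def Xrot (θ : ℝ) (X : Fin 3 → ℝ) : Fin 3 → ℝ := fun j =>
  if j = 0 then X 0 else if j = 1 then Real.cos θ * X 1 + Real.sin θ * X 2
  else Real.cos θ * X 2 - Real.sin θ * X 1

def Yrot (X : Fin 3 → ℝ) : Fin 3 → ℝ := fun j =>
  if j = 0 then 0 else if j = 1 then X 2 else -X 1

theorem null_rot {ci : ℝ} {t : T3} (ht : NullT ci t) (X : Fin 3 → ℝ)
    (hX : (X 0) ^ 2 = ci ^ 2 * ((X 1) ^ 2 + (X 2) ^ 2)) :
    ∑ α : Fin 3, ∑ β : Fin 3, ∑ γ : Fin 3, t α β γ *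
      (Yrot X α * X β * X γ + X α * Yrot X β * X γ + X α * X β * Yrot X γ) = 0 := by
  have hX0 : ∀ j, Xrot 0 X j = X j := by
    refine fin3cases ?_ ?_ ?_ <;> simp [Xrot]
  have hdX : ∀ j, HasDerivAt (fun θ => Xrot θ X j) (Yrot X j) 0 := by
    refine fin3cases ?_ ?_ ?_
    · simpa [Xrot, Yrot] using hasDerivAt_const (0 : ℝ) (X 0)
    · have h := ((Real.hasDerivAt_cos 0).mul_const (X 1)).fun_add
        ((Real.hasDerivAt_sin 0).mul_const (X 2))
      simp only [Real.sin_zero, Real.cos_zero, neg_zero, zero_mul, one_mul, zero_add] at h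
      simpa [Xrot, Yrot] using h
    · have h := ((Real.hasDerivAt_cos 0).mul_const (X 2)).fun_sub
        ((Real.hasDerivAt_sin 0).mul_const (X 1))
      simp only [Real.sin_zero, Real.cos_zero, neg_zero, zero_mul, one_mul, zero_sub] at h
      simpa [Xrot, Yrot] using h
  set g : ℝ → ℝ := fun θ => ∑ α : Fin 3, ∑ β : Fin 3, ∑ γ : Fin 3,
    t α β γ * Xrot θ X α * Xrot θ X β * Xrot θ X γ with hg_def
  have hg : ∀ θ, g θ = 0 := by
    intro θ
    refine ht (Xrot θ X) ?_
    have hsc := Real.sin_sq_add_cos_sq θ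
    have e0 : Xrot θ X 0 = X 0 := by simp [Xrot]
    have e1 : Xrot θ X 1 = Real.cos θ * X 1 + Real.sin θ * X 2 := by simp [Xrot]
    have e2 : Xrot θ X 2 = Real.cos θ * X 2 - Real.sin θ * X 1 := by simp [Xrot]
    rw [e0, e1, e2, hX]
    nlinarith [hsc]
  have H : ∀ α β γ : Fin 3, HasDerivAt (fun θ => t α β γ * Xrot θ X α * Xrot θ X β * Xrot θ X γ)
      (t α β γ * (Yrot X α * X β * X γ + X α * Yrot X β * X γ + X α * X β * Yrot X γ)) 0 := by
    intro α β γ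
    have h1 : HasDerivAt (fun θ => t α β γ * Xrot θ X α) (t α β γ * Yrot X α) 0 :=
      (hdX α).const_mul _
    have h3 := (h1.fun_mul (hdX β)).fun_mul (hdX γ)
    refine h3.congr_deriv ?_
    rw [hX0 α, hX0 β, hX0 γ]
    ring
  have hg' : HasDerivAt g (∑ α : Fin 3, ∑ β : Fin 3, ∑ γ : Fin 3, t α β γ *
      (Yrot X α * X β * X γ + X α * Yrot X β * X γ + X α * X β * Yrot X γ)) 0 := by
    rw [hg_def]
    refine HasDerivAt.fun_sum fun α _ => ?_
    refine HasDerivAt.fun_sum fun β _ => ?_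
    exact HasDerivAt.fun_sum fun γ _ => H α β γ
  have h0 : HasDerivAt g 0 0 := by
    have : g = fun _ => 0 := funext hg
    rw [this]; exact hasDerivAt_const _ _
  exact hg'.unique h0

set_option maxHeartbeats 1000000 in
theorem nullT_rho {ci : ℝ} {t : T3} (ht : NullT ci t) (i : Fin 5) : NullT ci (rho i t) := by
  refine fin5cases (P := fun i => NullT ci (rho i t)) ?_ ?_ ?_ ?_ ?_ i
  · intro X hX; simp [rho, cmat]
  · intro X hX; simp [rho, cmat]
  · intro X hX; simp [rho, cmat]
  · intro X hX
    have h := null_rot ht X hX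
    have Y0 : Yrot X 0 = 0 := by simp [Yrot]
    have Y1 : Yrot X 1 = X 2 := by simp [Yrot]
    have Y2 : Yrot X 2 = -X 1 := by simp [Yrot]
    simp only [Fin.sum_univ_three, Y0, Y1, Y2] at h
    simp only [rho, cmat, Fin.sum_univ_three]
    simp
    linear_combination -h
  · intro X hX
    have h := ht X hX
    simp only [Fin.sum_univ_three] at h
    simp only [rho, cmat, Fin.sum_univ_three]
    simp
    linear_combination -3 * h

section chunk4

variable {s : Set Pt} (hs : IsOpen s) {v w : Pt → ℝ} {p : Pt}
include hs

theorem gam_pd_swap (hv : ContDiffOn ℝ (⊤ : ℕ∞) v s) (hp : p ∈ s) (i : Fin 5) (γ : Fin 3) :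
    Gam i (pd γ v) p = pd γ (Gam i v) p - ∑ δ, cmat i γ δ * pd δ v p := by
  have h := pd_gam hs hv hp i γ; linarith

theorem gam_pd2 (hw : ContDiffOn ℝ (⊤ : ℕ∞) w s) (hp : p ∈ s) (i : Fin 5) (α β : Fin 3) :
    Gam i (pd α (pd β w)) p = pd α (pd β (Gam i w)) p
      - (∑ δ, cmat i α δ * pd δ (pd β w) p) - ∑ δ, cmat i β δ * pd α (pd δ w) p := by
  have h1 := gam_pd_swap hs (pd_smooth hs hw β) hp i α
  have h2 : pd α (Gam i (pd β w)) p
      = pd α (fun q => pd β (Gam i w) q - ∑ δ, cmat i β δ * pd δ w q) p := by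
    refine pd_congr hs (fun q hq => ?_) hp α
    have h := pd_gam hs hw hq i β; linarith
  have hd1 : DifferentiableAt ℝ (pd β (Gam i w)) p :=
    diffAt hs (pd_smooth hs (gam_smooth hs hw i) β) hp
  have hdd : ∀ δ : Fin 3, DifferentiableAt ℝ (fun q => cmat i β δ * pd δ w q) p :=
    fun δ => (diffAt hs (pd_smooth hs hw δ) hp).const_mul _
  have hd2 : DifferentiableAt ℝ (fun q => ∑ δ, cmat i β δ * pd δ w q) p :=
    DifferentiableAt.fun_sum fun δ _ => hdd δ
  have h3 : pd α (fun q => pd β (Gam i w) q - ∑ δ, cmat i β δ * pd δ w q) p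
      = pd α (pd β (Gam i w)) p - ∑ δ, cmat i β δ * pd α (pd δ w) p := by
    rw [pd_sub hd1 hd2 α, pd_finsum _ (fun δ => hdd δ) α]
    congr 1
    exact Finset.sum_congr rfl fun δ _ => pd_const_mul (diffAt hs (pd_smooth hs hw δ) hp) _ α
  rw [h1, h2, h3]; ring

set_option maxHeartbeats 2000000 in
theorem gam_NF (hv : ContDiffOn ℝ (⊤ : ℕ∞) v s) (hw : ContDiffOn ℝ (⊤ : ℕ∞) w s) (hp : p ∈ s)
    (i : Fin 5) (t : T3) :
    Gam i (NF t v w) p = NF t (Gam i v) w p + NF t v (Gam i w) p + NF (rho i t) v w p := by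
  classical
  have hFsm : ∀ j : Fin 3 × Fin 3 × Fin 3, ContDiffOn ℝ (⊤ : ℕ∞)
      (fun q => t j.1 j.2.1 j.2.2 * (pd j.2.2 v q * pd j.1 (pd j.2.1 w) q)) s := fun j =>
    contDiffOn_const.mul ((pd_smooth hs hv _).mul (pd_smooth hs (pd_smooth hs hw _) _))
  have e1 : NF t v w = fun q => ∑ j : Fin 3 × Fin 3 × Fin 3,
      t j.1 j.2.1 j.2.2 * (pd j.2.2 v q * pd j.1 (pd j.2.1 w) q) := by
    funext q
    simp [NF, Fintype.sum_prod_type, mul_assoc]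
  rw [e1, gam_finsum hs _ hFsm hp i]
  have key : ∀ j : Fin 3 × Fin 3 × Fin 3,
      Gam i (fun q => t j.1 j.2.1 j.2.2 * (pd j.2.2 v q * pd j.1 (pd j.2.1 w) q)) p =
      t j.1 j.2.1 j.2.2 *
        ((pd j.2.2 (Gam i v) p - ∑ δ, cmat i j.2.2 δ * pd δ v p) * pd j.1 (pd j.2.1 w) p
        + pd j.2.2 v p * (pd j.1 (pd j.2.1 (Gam i w)) p
            - (∑ δ, cmat i j.1 δ * pd δ (pd j.2.1 w) p)
            - ∑ δ, cmat i j.2.1 δ * pd j.1 (pd δ w) p)) := by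
    intro j
    have hdv : DifferentiableAt ℝ (pd j.2.2 v) p := diffAt hs (pd_smooth hs hv _) hp
    have hdw : DifferentiableAt ℝ (pd j.1 (pd j.2.1 w)) p :=
      diffAt hs (pd_smooth hs (pd_smooth hs hw _) _) hp
    rw [gam_const_mul (hdv.fun_mul hdw) _ i, gam_mul hdv hdw i,
      gam_pd_swap hs hv hp i j.2.2, gam_pd2 hs hw hp i j.1 j.2.1]
  rw [Finset.sum_congr rfl (fun j _ => key j)]
  simp only [NF, rho, Fintype.sum_prod_type, Fin.sum_univ_three]
  ring

end chunk4

/-! ### Multi-index increment and list machinery -/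

def incr (i : Fin 5) (b : Fin 5 → ℕ) : Fin 5 → ℕ := Function.update b i (b i + 1)

theorem incr_apply_self (i : Fin 5) (b : Fin 5 → ℕ) : incr i b i = b i + 1 := by
  simp [incr]

theorem incr_apply_ne (i j : Fin 5) (b : Fin 5 → ℕ) (h : j ≠ i) : incr i b j = b j := by
  simp [incr, Function.update_of_ne h]

theorem incr_sum (i : Fin 5) (b : Fin 5 → ℕ) : ∑ j, incr i b j = (∑ j, b j) + 1 := by
  have h1 : ∑ j, incr i b j = incr i b i + ∑ j ∈ Finset.univ.erase i, incr i b j :=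
    (Finset.add_sum_erase _ _ (Finset.mem_univ i)).symm
  have h2 : ∑ j, b j = b i + ∑ j ∈ Finset.univ.erase i, b j :=
    (Finset.add_sum_erase _ _ (Finset.mem_univ i)).symm
  have h3 : ∑ j ∈ Finset.univ.erase i, incr i b j = ∑ j ∈ Finset.univ.erase i, b j :=
    Finset.sum_congr rfl fun j hj => incr_apply_ne i j b (Finset.ne_of_mem_erase hj)
  rw [h1, h3, incr_apply_self]; omega

theorem gam_gamPow (i : Fin 5) (b : Fin 5 → ℕ) (hb : ∀ j < i, b j = 0) (f : Pt → ℝ) :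
    Gam i (GamPow b f) = GamPow (incr i b) f := by
  revert b
  refine fin5cases (P := fun i => ∀ b : Fin 5 → ℕ, (∀ j < i, b j = 0) →
    Gam i (GamPow b f) = GamPow (incr i b) f) ?_ ?_ ?_ ?_ ?_ i <;> intro b hb
  · have e : GamPow (incr 0 b) f = (Gam 0)^[b 0 + 1] ((Gam 1)^[b 1] ((Gam 2)^[b 2]
        ((Gam 3)^[b 3] ((Gam 4)^[b 4] f)))) := by
      unfold GamPow
      rw [incr_apply_self, incr_apply_ne _ _ _ (by decide), incr_apply_ne _ _ _ (by decide),
        incr_apply_ne _ _ _ (by decide), incr_apply_ne _ _ _ (by decide)]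
    rw [e, Function.iterate_succ_apply']
    rfl
  · have h0 : b 0 = 0 := hb 0 (by decide)
    have e : GamPow (incr 1 b) f = (Gam 1)^[b 1 + 1] ((Gam 2)^[b 2]
        ((Gam 3)^[b 3] ((Gam 4)^[b 4] f))) := by
      unfold GamPow
      rw [incr_apply_self, incr_apply_ne _ _ _ (by decide), incr_apply_ne _ _ _ (by decide),
        incr_apply_ne _ _ _ (by decide), incr_apply_ne _ _ _ (by decide), h0]
      rfl
    rw [e, Function.iterate_succ_apply']
    unfold GamPow
    rw [h0]
    rfl
  · have h0 : b 0 = 0 := hb 0 (by decide)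
    have h1 : b 1 = 0 := hb 1 (by decide)
    have e : GamPow (incr 2 b) f = (Gam 2)^[b 2 + 1] ((Gam 3)^[b 3] ((Gam 4)^[b 4] f)) := by
      unfold GamPow
      rw [incr_apply_self, incr_apply_ne _ _ _ (by decide), incr_apply_ne _ _ _ (by decide),
        incr_apply_ne _ _ _ (by decide), incr_apply_ne _ _ _ (by decide), h0, h1]
      rfl
    rw [e, Function.iterate_succ_apply']
    unfold GamPow
    rw [h0, h1]
    rfl
  · have h0 : b 0 = 0 := hb 0 (by decide)
    have h1 : b 1 = 0 := hb 1 (by decide)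
    have h2 : b 2 = 0 := hb 2 (by decide)
    have e : GamPow (incr 3 b) f = (Gam 3)^[b 3 + 1] ((Gam 4)^[b 4] f) := by
      unfold GamPow
      rw [incr_apply_self, incr_apply_ne _ _ _ (by decide), incr_apply_ne _ _ _ (by decide),
        incr_apply_ne _ _ _ (by decide), incr_apply_ne _ _ _ (by decide), h0, h1, h2]
      rfl
    rw [e, Function.iterate_succ_apply']
    unfold GamPow
    rw [h0, h1, h2]
    rfl
  · have h0 : b 0 = 0 := hb 0 (by decide)
    have h1 : b 1 = 0 := hb 1 (by decide)
    have h2 : b 2 = 0 := hb 2 (by decide)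
    have h3 : b 3 = 0 := hb 3 (by decide)
    have e : GamPow (incr 4 b) f = (Gam 4)^[b 4 + 1] f := by
      unfold GamPow
      rw [incr_apply_self, incr_apply_ne _ _ _ (by decide), incr_apply_ne _ _ _ (by decide),
        incr_apply_ne _ _ _ (by decide), incr_apply_ne _ _ _ (by decide), h0, h1, h2, h3]
      rfl
    rw [e, Function.iterate_succ_apply']
    unfold GamPow
    rw [h0, h1, h2, h3]
    rfl

/-! ### apList and canonical lists -/

def apList : List (Fin 5) → (Pt → ℝ) → Pt → ℝ
  | [], v => v
  | i :: L, v => Gam i (apList L v)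

theorem apList_smooth {s : Set Pt} (hs : IsOpen s) {v : Pt → ℝ} (hv : ContDiffOn ℝ (⊤ : ℕ∞) v s) :
    ∀ L : List (Fin 5), ContDiffOn ℝ (⊤ : ℕ∞) (apList L v) s := by
  intro L
  induction L with
  | nil => exact hv
  | cons i L ih => exact gam_smooth hs ih i

theorem apList_append (L1 L2 : List (Fin 5)) (v : Pt → ℝ) :
    apList (L1 ++ L2) v = apList L1 (apList L2 v) := by
  induction L1 with
  | nil => rfl
  | cons i L ih => simp [apList, ih]

theorem apList_replicate (n : ℕ) (i : Fin 5) (v : Pt → ℝ) :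
    apList (List.replicate n i) v = (Gam i)^[n] v := by
  induction n with
  | zero => rfl
  | succ n ih => rw [List.replicate_succ]; simp [apList, ih, Function.iterate_succ_apply']

def canonList (b : Fin 5 → ℕ) : List (Fin 5) :=
  List.replicate (b 0) 0 ++ (List.replicate (b 1) 1 ++ (List.replicate (b 2) 2 ++
    (List.replicate (b 3) 3 ++ List.replicate (b 4) 4)))

theorem gamPow_eq_apList (b : Fin 5 → ℕ) (v : Pt → ℝ) : GamPow b v = apList (canonList b) v := by
  unfold canonList
  rw [apList_append, apList_append, apList_append, apList_append,
    apList_replicate, apList_replicate, apList_replicate, apList_replicate, apList_replicate]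
  rfl

theorem canonList_length (b : Fin 5 → ℕ) : (canonList b).length = ∑ j, b j := by
  simp [canonList, Fin.sum_univ_five]
  omega

theorem replicate_sorted (n : ℕ) (i : Fin 5) : (List.replicate n i).Pairwise (· ≤ ·) := by
  induction n with
  | zero => simp
  | succ n ih =>
      rw [List.replicate_succ, List.pairwise_cons]
      exact ⟨fun b hb => le_of_eq (List.eq_of_mem_replicate hb).symm, ih⟩

theorem sorted_append {l1 l2 : List (Fin 5)} (h1 : l1.Pairwise (· ≤ ·)) (h2 : l2.Pairwise (· ≤ ·))
    (h : ∀ a ∈ l1, ∀ b ∈ l2, a ≤ b) : (l1 ++ l2).Pairwise (· ≤ ·) := by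
  rw [List.pairwise_append]; exact ⟨h1, h2, h⟩

theorem canonList_sorted (b : Fin 5 → ℕ) : (canonList b).Pairwise (· ≤ ·) := by
  unfold canonList
  refine sorted_append (replicate_sorted _ _) ?_ ?_
  · refine sorted_append (replicate_sorted _ _) ?_ ?_
    · refine sorted_append (replicate_sorted _ _) ?_ ?_
      · refine sorted_append (replicate_sorted _ _) (replicate_sorted _ _) ?_
        intro x hx y hy
        rw [List.eq_of_mem_replicate hx, List.eq_of_mem_replicate hy]; decide
      · intro x hx y hy
        rw [List.eq_of_mem_replicate hx]
        rcases List.mem_append.1 hy with hy | hy <;>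
          rw [List.eq_of_mem_replicate hy] <;> decide
    · intro x hx y hy
      rw [List.eq_of_mem_replicate hx]
      rcases List.mem_append.1 hy with hy | hy
      · rw [List.eq_of_mem_replicate hy]; decide
      rcases List.mem_append.1 hy with hy | hy <;>
        rw [List.eq_of_mem_replicate hy] <;> decide
  · intro x hx y hy
    rw [List.eq_of_mem_replicate hx]
    rcases List.mem_append.1 hy with hy | hy
    · rw [List.eq_of_mem_replicate hy]; decide
    rcases List.mem_append.1 hy with hy | hy
    · rw [List.eq_of_mem_replicate hy]; decide
    rcases List.mem_append.1 hy with hy | hy <;>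
      rw [List.eq_of_mem_replicate hy] <;> decide


/-! ### Linear combinations of terms `Γ^b ∂_δ u` -/

abbrev E1 : Type := ℝ × (Fin 5 → ℕ) × Fin 3

def Ev1 (Lst : List E1) (u : Pt → ℝ) (p : Pt) : ℝ :=
  (Lst.map fun e => e.1 * GamPow e.2.1 (pd e.2.2 u) p).sum

theorem gamPow_zero (f : Pt → ℝ) : GamPow (fun _ => 0) f = f := rfl

theorem Ev1_cons (e : E1) (Lst : List E1) (u : Pt → ℝ) (p : Pt) :
    Ev1 (e :: Lst) u p = e.1 * GamPow e.2.1 (pd e.2.2 u) p + Ev1 Lst u p := by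
  simp [Ev1]

theorem Ev1_append (L1 L2 : List E1) (u : Pt → ℝ) (p : Pt) :
    Ev1 (L1 ++ L2) u p = Ev1 L1 u p + Ev1 L2 u p := by
  simp [Ev1]

theorem Ev1_scale (c : ℝ) (Lst : List E1) (u : Pt → ℝ) (p : Pt) :
    Ev1 (Lst.map fun e => (c * e.1, e.2)) u p = c * Ev1 Lst u p := by
  induction Lst with
  | nil => simp [Ev1]
  | cons e L ih =>
      rw [List.map_cons, Ev1_cons, Ev1_cons, ih]
      ring

section evone

variable {s : Set Pt} (hs : IsOpen s) {u : Pt → ℝ} {p : Pt}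
include hs

theorem Ev1_smooth (hu : ContDiffOn ℝ (⊤ : ℕ∞) u s) (Lst : List E1) :
    ContDiffOn ℝ (⊤ : ℕ∞) (fun q => Ev1 Lst u q) s := by
  induction Lst with
  | nil => exact contDiffOn_const
  | cons e L ih =>
      have : (fun q => Ev1 (e :: L) u q) =
          fun q => e.1 * GamPow e.2.1 (pd e.2.2 u) q + Ev1 L u q :=
        funext fun q => Ev1_cons e L u q
      rw [this]
      exact (contDiffOn_const.mul (gamPow_smooth hs (pd_smooth hs hu e.2.2) e.2.1)).add ih

omit hs in
theorem gam_add {f g : Pt → ℝ} (hf : DifferentiableAt ℝ f p) (hg : DifferentiableAt ℝ g p)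
    (i : Fin 5) : Gam i (fun q => f q + g q) p = Gam i f p + Gam i g p := by
  refine fin5cases (P := fun i => Gam i (fun q => f q + g q) p = Gam i f p + Gam i g p)
    ?_ ?_ ?_ ?_ ?_ i
  · exact pd_add' hf hg 0
  · exact pd_add' hf hg 1
  · exact pd_add' hf hg 2
  · beta_reduce
    show p.1 * pd 2 _ p - p.2.1 * pd 1 _ p = _
    rw [pd_add' hf hg 2, pd_add' hf hg 1]
    show _ = (p.1 * pd 2 f p - p.2.1 * pd 1 f p) + (p.1 * pd 2 g p - p.2.1 * pd 1 g p)
    ring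
  · beta_reduce
    show p.2.2 * pd 0 _ p + p.1 * pd 1 _ p + p.2.1 * pd 2 _ p = _
    rw [pd_add' hf hg 0, pd_add' hf hg 1, pd_add' hf hg 2]
    show _ = (p.2.2 * pd 0 f p + p.1 * pd 1 f p + p.2.1 * pd 2 f p)
      + (p.2.2 * pd 0 g p + p.1 * pd 1 g p + p.2.1 * pd 2 g p)
    ring

omit hs in
theorem gam_zero (i : Fin 5) : Gam i (fun _ => (0 : ℝ)) p = 0 := by
  have hz : ∀ α : Fin 3, pd α (fun _ : Pt => (0 : ℝ)) p = 0 := by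
    intro α; simp [pd, fderiv_const]
  refine fin5cases (P := fun i => Gam i (fun _ => (0 : ℝ)) p = 0) ?_ ?_ ?_ ?_ ?_ i
  · exact hz 0
  · exact hz 1
  · exact hz 2
  · beta_reduce
    show p.1 * pd 2 _ p - p.2.1 * pd 1 _ p = 0
    rw [hz 2, hz 1]; ring
  · beta_reduce
    show p.2.2 * pd 0 _ p + p.1 * pd 1 _ p + p.2.1 * pd 2 _ p = 0
    rw [hz 0, hz 1, hz 2]; ring

theorem gam_congr {f g : Pt → ℝ} (h : ∀ q ∈ s, f q = g q) (hp : p ∈ s) (i : Fin 5) :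
    Gam i f p = Gam i g p := by
  refine fin5cases (P := fun i => Gam i f p = Gam i g p) ?_ ?_ ?_ ?_ ?_ i
  · exact pd_congr hs h hp 0
  · exact pd_congr hs h hp 1
  · exact pd_congr hs h hp 2
  · beta_reduce
    show p.1 * pd 2 _ p - p.2.1 * pd 1 _ p = p.1 * pd 2 _ p - p.2.1 * pd 1 _ p
    rw [pd_congr hs h hp 2, pd_congr hs h hp 1]
  · beta_reduce
    show p.2.2 * pd 0 _ p + p.1 * pd 1 _ p + p.2.1 * pd 2 _ p = _
    rw [pd_congr hs h hp 0, pd_congr hs h hp 1, pd_congr hs h hp 2]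
    rfl

theorem gam_Ev1 (hu : ContDiffOn ℝ (⊤ : ℕ∞) u s) (hp : p ∈ s) (i : Fin 5) (Lst : List E1)
    (hb : ∀ e ∈ Lst, ∀ j < i, e.2.1 j = 0) :
    Gam i (fun q => Ev1 Lst u q) p = Ev1 (Lst.map fun e => (e.1, incr i e.2.1, e.2.2)) u p := by
  induction Lst with
  | nil => exact gam_zero i
  | cons e L ih =>
      have hfe : (fun q => Ev1 (e :: L) u q)
          = fun q => (fun q => e.1 * GamPow e.2.1 (pd e.2.2 u) q) q + (fun q => Ev1 L u q) q :=
        funext fun q => Ev1_cons e L u q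
      have hd1 : DifferentiableAt ℝ (fun q => e.1 * GamPow e.2.1 (pd e.2.2 u) q) p :=
        (diffAt hs (gamPow_smooth hs (pd_smooth hs hu e.2.2) e.2.1) hp).const_mul _
      have hd2 : DifferentiableAt ℝ (fun q => Ev1 L u q) p :=
        diffAt hs (Ev1_smooth hs hu L) hp
      rw [hfe, gam_add hd1 hd2 i,
        gam_const_mul (diffAt hs (gamPow_smooth hs (pd_smooth hs hu e.2.2) e.2.1) hp) _ i,
        gam_gamPow i e.2.1 (hb e (List.mem_cons_self)) (pd e.2.2 u),
        ih (fun e' he' => hb e' (List.mem_cons_of_mem e he')), List.map_cons, Ev1_cons]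

theorem pd_Ev1 (hu : ContDiffOn ℝ (⊤ : ℕ∞) u s) (hp : p ∈ s) (α : Fin 3) (Lst : List E1) :
    pd α (fun q => Ev1 Lst u q) p
      = (Lst.map fun e => e.1 * pd α (GamPow e.2.1 (pd e.2.2 u)) p).sum := by
  induction Lst with
  | nil =>
      simp only [Ev1, List.map_nil, List.sum_nil]
      simp [pd, fderiv_const]
  | cons e L ih =>
      have hfe : (fun q => Ev1 (e :: L) u q)
          = fun q => (fun q => e.1 * GamPow e.2.1 (pd e.2.2 u) q) q + (fun q => Ev1 L u q) q :=
        funext fun q => Ev1_cons e L u q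
      have hdg : DifferentiableAt ℝ (GamPow e.2.1 (pd e.2.2 u)) p :=
        diffAt hs (gamPow_smooth hs (pd_smooth hs hu e.2.2) e.2.1) hp
      rw [hfe, pd_add' (hdg.const_mul _) (diffAt hs (Ev1_smooth hs hu L) hp) α,
        pd_const_mul hdg _ α, ih, List.map_cons, List.sum_cons]

theorem Zd_Ev1 (hu : ContDiffOn ℝ (⊤ : ℕ∞) u s) (hp : p ∈ s) (ci : ℝ) (α : Fin 3) (Lst : List E1) :
    Zd ci α (fun q => Ev1 Lst u q) p
      = (Lst.map fun e => e.1 * Zd ci α (GamPow e.2.1 (pd e.2.2 u)) p).sum := by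
  rw [Zd, pd_Ev1 hs hu hp α Lst, pd_Ev1 hs hu hp 0 Lst]
  induction Lst with
  | nil => simp
  | cons e L ih =>
      simp only [List.map_cons, List.sum_cons, Zd] at *
      rw [show ∀ x y X Y c d : ℝ, c * (x + X) + d * (y + Y) = (c*x + d*y) + (c*X + d*Y) from
        fun _ _ _ _ _ _ => by ring, ih]
      ring

end evone

/-! ### Lemma A : commuting one derivative past `Γ^b` -/

theorem pd_apList : ∀ L : List (Fin 5), L.Pairwise (· ≤ ·) → ∀ γ : Fin 3,
    ∃ Lst : List E1,
      (∀ e ∈ Lst, (∑ j, e.2.1 j) ≤ L.length ∧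
        ∀ i : Fin 5, (∀ j ∈ L, i ≤ j) → ∀ j < i, e.2.1 j = 0) ∧
      ∀ (s : Set Pt), IsOpen s → ∀ (u : Pt → ℝ), ContDiffOn ℝ (⊤ : ℕ∞) u s → ∀ p ∈ s,
        pd γ (apList L u) p = Ev1 Lst u p := by
  intro L
  induction L with
  | nil =>
      intro _ γ
      refine ⟨[(1, fun _ => 0, γ)], ?_, ?_⟩
      · intro e he
        simp only [List.mem_singleton] at he
        subst he
        exact ⟨by simp, fun i _ j _ => rfl⟩
      · intro s hs u hu p hp
        simp [Ev1, apList, gamPow_zero]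
  | cons i L ih =>
      intro hSort γ
      have hL : L.Pairwise (· ≤ ·) := hSort.of_cons
      have hiL : ∀ j ∈ L, i ≤ j := fun j hj => List.rel_of_pairwise_cons hSort hj
      obtain ⟨Mst, hMb, hMeq⟩ := ih hL γ
      have hC : ∀ δ : Fin 3, ∃ Lst : List E1,
          (∀ e ∈ Lst, (∑ j, e.2.1 j) ≤ L.length ∧
            ∀ i0 : Fin 5, (∀ j ∈ L, i0 ≤ j) → ∀ j < i0, e.2.1 j = 0) ∧
          ∀ (s : Set Pt), IsOpen s → ∀ (u : Pt → ℝ), ContDiffOn ℝ (⊤ : ℕ∞) u s → ∀ p ∈ s,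
            pd δ (apList L u) p = Ev1 Lst u p := fun δ => ih hL δ
      choose Cst hCb hCeq using hC
      refine ⟨(Mst.map fun e => (e.1, incr i e.2.1, e.2.2))
          ++ (((Cst 0).map fun e => (cmat i γ 0 * e.1, e.2))
            ++ (((Cst 1).map fun e => (cmat i γ 1 * e.1, e.2))
              ++ ((Cst 2).map fun e => (cmat i γ 2 * e.1, e.2)))), ?_, ?_⟩
      · intro e he
        rcases List.mem_append.1 he with he | he
        · obtain ⟨e', he', rfl⟩ := List.mem_map.1 he
          dsimp only
          constructor
          · rw [incr_sum]
            have := (hMb e' he').1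
            simp only [List.length_cons]
            omega
          · intro i0 hi0 j hj
            have hi0i : i0 ≤ i := hi0 i (List.mem_cons_self)
            have hji : j ≠ i := ne_of_lt (lt_of_lt_of_le hj hi0i)
            rw [incr_apply_ne i j _ hji]
            exact (hMb e' he').2 i0 (fun j' hj' => hi0 j' (List.mem_cons_of_mem i hj')) j hj
        · have main : ∀ δ : Fin 3, e ∈ (Cst δ).map (fun e => (cmat i γ δ * e.1, e.2)) →
              (∑ j, e.2.1 j) ≤ (i :: L).length ∧
              ∀ i0 : Fin 5, (∀ j ∈ (i :: L), i0 ≤ j) → ∀ j < i0, e.2.1 j = 0 := by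
            intro δ hmem
            obtain ⟨e', he', rfl⟩ := List.mem_map.1 hmem
            dsimp only
            refine ⟨?_, ?_⟩
            · have := (hCb δ e' he').1
              simp only [List.length_cons]
              omega
            · intro i0 hi0 j hj
              exact (hCb δ e' he').2 i0 (fun j' hj' => hi0 j' (List.mem_cons_of_mem i hj')) j hj
          rcases List.mem_append.1 he with he | he
          · exact main 0 he
          rcases List.mem_append.1 he with he | he
          · exact main 1 he
          · exact main 2 he
      · intro s hs u hu p hp
        have hsm : ContDiffOn ℝ (⊤ : ℕ∞) (apList L u) s := apList_smooth hs hu L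
        have step1 : pd γ (apList (i :: L) u) p
            = Gam i (pd γ (apList L u)) p + ∑ δ, cmat i γ δ * pd δ (apList L u) p := by
          show pd γ (Gam i (apList L u)) p = _
          exact pd_gam hs hsm hp i γ
        have step2 : Gam i (pd γ (apList L u)) p
            = Ev1 (Mst.map fun e => (e.1, incr i e.2.1, e.2.2)) u p := by
          rw [gam_congr hs (fun q hq => hMeq s hs u hu q hq) hp i]
          exact gam_Ev1 hs hu hp i Mst
            (fun e he => (hMb e he).2 i hiL)
        have step3 : ∀ δ, pd δ (apList L u) p = Ev1 (Cst δ) u p :=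
          fun δ => hCeq δ s hs u hu p hp
        rw [step1, step2, Ev1_append, Ev1_append, Ev1_append, Fin.sum_univ_three,
          step3 0, step3 1, step3 2, Ev1_scale, Ev1_scale, Ev1_scale]
        ring

theorem pd_gamPow (b : Fin 5 → ℕ) (γ : Fin 3) :
    ∃ Lst : List E1, (∀ e ∈ Lst, (∑ j, e.2.1 j) ≤ ∑ j, b j) ∧
      ∀ (s : Set Pt), IsOpen s → ∀ (u : Pt → ℝ), ContDiffOn ℝ (⊤ : ℕ∞) u s → ∀ p ∈ s,
        pd γ (GamPow b u) p = Ev1 Lst u p := by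
  obtain ⟨Lst, hb, heq⟩ := pd_apList (canonList b) (canonList_sorted b) γ
  refine ⟨Lst, fun e he => ?_, fun s hs u hu p hp => ?_⟩
  · have := (hb e he).1
    rwa [canonList_length b] at this
  · rw [gamPow_eq_apList]
    exact heq s hs u hu p hp

/-! ### Linear combinations of null forms of `Γ^b v, Γ^c w` -/

abbrev E2 : Type := ℝ × T3 × (Fin 5 → ℕ) × (Fin 5 → ℕ)

def Ev2 (Lst : List E2) (v w : Pt → ℝ) (p : Pt) : ℝ :=
  (Lst.map fun e => e.1 * NF e.2.1 (GamPow e.2.2.1 v) (GamPow e.2.2.2 w) p).sum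

theorem Ev2_cons (e : E2) (Lst : List E2) (v w : Pt → ℝ) (p : Pt) :
    Ev2 (e :: Lst) v w p
      = e.1 * NF e.2.1 (GamPow e.2.2.1 v) (GamPow e.2.2.2 w) p + Ev2 Lst v w p := by
  simp [Ev2]

theorem Ev2_append (L1 L2 : List E2) (v w : Pt → ℝ) (p : Pt) :
    Ev2 (L1 ++ L2) v w p = Ev2 L1 v w p + Ev2 L2 v w p := by
  simp [Ev2]

section evtwo

variable {s : Set Pt} (hs : IsOpen s) {v w : Pt → ℝ} {p : Pt}
include hs

theorem NF_smooth (hv : ContDiffOn ℝ (⊤ : ℕ∞) v s) (hw : ContDiffOn ℝ (⊤ : ℕ∞) w s) (t : T3) :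
    ContDiffOn ℝ (⊤ : ℕ∞) (NF t v w) s := by
  refine ContDiffOn.sum fun α _ => ContDiffOn.sum fun β _ => ContDiffOn.sum fun γ _ => ?_
  exact (contDiffOn_const.mul (pd_smooth hs hv γ)).mul (pd_smooth hs (pd_smooth hs hw β) α)

theorem Ev2_smooth (hv : ContDiffOn ℝ (⊤ : ℕ∞) v s) (hw : ContDiffOn ℝ (⊤ : ℕ∞) w s) (Lst : List E2) :
    ContDiffOn ℝ (⊤ : ℕ∞) (fun q => Ev2 Lst v w q) s := by
  induction Lst with
  | nil => exact contDiffOn_const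
  | cons e L ih =>
      have : (fun q => Ev2 (e :: L) v w q) = fun q =>
          e.1 * NF e.2.1 (GamPow e.2.2.1 v) (GamPow e.2.2.2 w) q + Ev2 L v w q :=
        funext fun q => Ev2_cons e L v w q
      rw [this]
      exact (contDiffOn_const.mul
        (NF_smooth hs (gamPow_smooth hs hv _) (gamPow_smooth hs hw _) _)).add ih

/-- One differentiation step on an `E2` term. -/
def stepE (i : Fin 5) (e : E2) : List E2 :=
  [(e.1, e.2.1, incr i e.2.2.1, e.2.2.2), (e.1, e.2.1, e.2.2.1, incr i e.2.2.2),
    (e.1, rho i e.2.1, e.2.2.1, e.2.2.2)]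

theorem gam_Ev2 (hv : ContDiffOn ℝ (⊤ : ℕ∞) v s) (hw : ContDiffOn ℝ (⊤ : ℕ∞) w s) (hp : p ∈ s) (i : Fin 5)
    (Lst : List E2)
    (hbc : ∀ e ∈ Lst, (∀ j < i, e.2.2.1 j = 0) ∧ (∀ j < i, e.2.2.2 j = 0)) :
    Gam i (fun q => Ev2 Lst v w q) p = Ev2 (Lst.flatMap (stepE i)) v w p := by
  induction Lst with
  | nil => exact gam_zero i
  | cons e L ih =>
      have hfe : (fun q => Ev2 (e :: L) v w q) = fun q =>
          (fun q => e.1 * NF e.2.1 (GamPow e.2.2.1 v) (GamPow e.2.2.2 w) q) q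
            + (fun q => Ev2 L v w q) q :=
        funext fun q => Ev2_cons e L v w q
      have hNFsm : ContDiffOn ℝ (⊤ : ℕ∞) (NF e.2.1 (GamPow e.2.2.1 v) (GamPow e.2.2.2 w)) s :=
        NF_smooth hs (gamPow_smooth hs hv _) (gamPow_smooth hs hw _) _
      have hd1 : DifferentiableAt ℝ (NF e.2.1 (GamPow e.2.2.1 v) (GamPow e.2.2.2 w)) p :=
        diffAt hs hNFsm hp
      have hd2 : DifferentiableAt ℝ (fun q => Ev2 L v w q) p :=
        diffAt hs (Ev2_smooth hs hv hw L) hp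
      rw [hfe, gam_add (hd1.const_mul _) hd2 i, gam_const_mul hd1 _ i,
        gam_NF hs (gamPow_smooth hs hv _) (gamPow_smooth hs hw _) hp i _,
        gam_gamPow i _ (hbc e (List.mem_cons_self)).1,
        gam_gamPow i _ (hbc e (List.mem_cons_self)).2,
        ih (fun e' he' => hbc e' (List.mem_cons_of_mem e he')),
        List.flatMap_cons, Ev2_append]
      simp only [stepE, Ev2, List.map_cons, List.map_nil, List.sum_cons, List.sum_nil]
      ring

end evtwo

/-! ### Master decomposition lemma -/

theorem apList_NF (ci : ℝ) : ∀ L : List (Fin 5), L.Pairwise (· ≤ ·) → ∀ t : T3, NullT ci t →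
    ∃ Lst : List E2,
      (∀ e ∈ Lst, NullT ci e.2.1 ∧ ((∑ j, e.2.2.1 j) + (∑ j, e.2.2.2 j) ≤ L.length) ∧
        (∀ i0 : Fin 5, (∀ j ∈ L, i0 ≤ j) → ∀ j < i0, e.2.2.1 j = 0 ∧ e.2.2.2 j = 0)) ∧
      ∀ (s : Set Pt), IsOpen s → ∀ v w : Pt → ℝ,
        ContDiffOn ℝ (⊤ : ℕ∞) v s → ContDiffOn ℝ (⊤ : ℕ∞) w s → ∀ p ∈ s,
        apList L (NF t v w) p = Ev2 Lst v w p := by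
  intro L
  induction L with
  | nil =>
      intro _ t ht
      refine ⟨[(1, t, fun _ => 0, fun _ => 0)], ?_, ?_⟩
      · intro e he
        simp only [List.mem_singleton] at he
        subst he
        exact ⟨ht, by simp, fun i0 _ j _ => ⟨rfl, rfl⟩⟩
      · intro s hs v w hv hw p hp
        simp [Ev2, apList, gamPow_zero]
  | cons i L ih =>
      intro hSort t ht
      have hL : L.Pairwise (· ≤ ·) := hSort.of_cons
      have hiL : ∀ j ∈ L, i ≤ j := fun j hj => List.rel_of_pairwise_cons hSort hj
      obtain ⟨Lst', hb', heq'⟩ := ih hL t ht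
      refine ⟨Lst'.flatMap (stepE i), ?_, ?_⟩
      · intro e he
        obtain ⟨e', he', hmem⟩ := List.mem_flatMap.1 he
        have hnull' := (hb' e' he').1
        have hsum' := (hb' e' he').2.1
        have hsupp' := (hb' e' he').2.2
        have hsupp'i := hsupp' i hiL
        simp only [stepE, List.mem_cons, List.mem_singleton, List.not_mem_nil, or_false] at hmem
        rcases hmem with rfl | rfl | rfl <;> dsimp only <;> refine ⟨?_, ?_, ?_⟩
        · exact hnull'
        · rw [incr_sum]; simp only [List.length_cons]; omega
        · intro i0 hi0 j hj
          have hi0i : i0 ≤ i := hi0 i (List.mem_cons_self)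
          have hji : j ≠ i := ne_of_lt (lt_of_lt_of_le hj hi0i)
          have h' := hsupp' i0 (fun j' hj' => hi0 j' (List.mem_cons_of_mem i hj')) j hj
          exact ⟨by rw [incr_apply_ne i j _ hji]; exact h'.1, h'.2⟩
        · exact hnull'
        · rw [incr_sum]; simp only [List.length_cons]; omega
        · intro i0 hi0 j hj
          have hi0i : i0 ≤ i := hi0 i (List.mem_cons_self)
          have hji : j ≠ i := ne_of_lt (lt_of_lt_of_le hj hi0i)
          have h' := hsupp' i0 (fun j' hj' => hi0 j' (List.mem_cons_of_mem i hj')) j hj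
          exact ⟨h'.1, by rw [incr_apply_ne i j _ hji]; exact h'.2⟩
        · exact nullT_rho hnull' i
        · simp only [List.length_cons]; omega
        · intro i0 hi0 j hj
          exact hsupp' i0 (fun j' hj' => hi0 j' (List.mem_cons_of_mem i hj')) j hj
      · intro s hs v w hv hw p hp
        have step1 : apList (i :: L) (NF t v w) p = Gam i (apList L (NF t v w)) p := rfl
        rw [step1, gam_congr hs (fun q hq => heq' s hs v w hv hw q hq) hp i]
        exact gam_Ev2 hs hv hw hp i Lst'
          (fun e he => ⟨fun j hj => ((hb' e he).2.2 i hiL j hj).1,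
            fun j hj => ((hb' e he).2.2 i hiL j hj).2⟩)

theorem gamPow_NF (ci : ℝ) (t : T3) (ht : NullT ci t) (b : Fin 5 → ℕ) :
    ∃ Lst : List E2,
      (∀ e ∈ Lst, NullT ci e.2.1 ∧ (∑ j, e.2.2.1 j) + (∑ j, e.2.2.2 j) ≤ ∑ j, b j) ∧
      ∀ (s : Set Pt), IsOpen s → ∀ v w : Pt → ℝ,
        ContDiffOn ℝ (⊤ : ℕ∞) v s → ContDiffOn ℝ (⊤ : ℕ∞) w s → ∀ p ∈ s,
        GamPow b (NF t v w) p = Ev2 Lst v w p := by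
  obtain ⟨Lst, hbd, heq⟩ := apList_NF ci (canonList b) (canonList_sorted b) t ht
  refine ⟨Lst, fun e he => ⟨(hbd e he).1, ?_⟩, fun s hs v w hv hw p hp => ?_⟩
  · have := (hbd e he).2.1
    rwa [canonList_length b] at this
  · rw [gamPow_eq_apList]
    exact heq s hs v w hv hw p hp

/-! ### Pointwise null form estimate -/

def chiF (ci : ℝ) (p : Pt) : Fin 3 → ℝ := ![1, -(p.1 / rad p) / ci, -(p.2.1 / rad p) / ci]

def GF (ci : ℝ) (p : Pt) (γ : Fin 3) (F : Pt → ℝ) : ℝ := if γ = 0 then 0 else Zd ci γ F p / ci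

def CtF (ci : ℝ) (t : T3) : ℝ :=
  (∑ α : Fin 3, ∑ β : Fin 3, ∑ γ : Fin 3, |t α β γ|) *
    ((1 / ci) * (1 + max 1 (1 / ci) + max 1 (1 / ci) * max 1 (1 / ci)))

theorem CtF_nonneg {ci : ℝ} (hci : 0 < ci) (t : T3) : 0 ≤ CtF ci t := by
  have h1 : (0:ℝ) ≤ ∑ α : Fin 3, ∑ β : Fin 3, ∑ γ : Fin 3, |t α β γ| :=
    Finset.sum_nonneg fun α _ => Finset.sum_nonneg fun β _ => Finset.sum_nonneg
      fun γ _ => abs_nonneg _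
  have h2 : (0:ℝ) ≤ 1 / ci := by positivity
  have h3 : (1:ℝ) ≤ max 1 (1/ci) := le_max_left _ _
  have : (0:ℝ) ≤ (1 / ci) * (1 + max 1 (1 / ci) + max 1 (1 / ci) * max 1 (1 / ci)) := by
    nlinarith
  exact mul_nonneg h1 this

theorem Znorm_nonneg (ci : ℝ) (F : Pt → ℝ) (p : Pt) : 0 ≤ Znorm ci F p :=
  add_nonneg (abs_nonneg _) (abs_nonneg _)

section ptwise

variable {s : Set Pt} (hs : IsOpen s) {ci : ℝ} (hci : 0 < ci) {V W : Pt → ℝ} {p : Pt}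
include hs hci

set_option maxHeartbeats 1000000 in
theorem NF_pointwise {t : T3} (ht : NullT ci t)
    (hV : ContDiffOn ℝ (⊤ : ℕ∞) V s) (hW : ContDiffOn ℝ (⊤ : ℕ∞) W s) (hp : p ∈ s)
    (hx : ¬(p.1 = 0 ∧ p.2.1 = 0)) :
    |NF t V W p| ≤ CtF ci t *
      (Znorm ci V p * (∑ α : Fin 3, ∑ β : Fin 3, |pd α (pd β W) p|)
        + (∑ γ : Fin 3, |pd γ V p|) * (∑ γ : Fin 3, Znorm ci (pd γ W) p)) := by
  have hsq : 0 < p.1 ^ 2 + p.2.1 ^ 2 := by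
    rcases not_and_or.1 hx with h | h
    · have : p.1 ^ 2 > 0 := by positivity
      nlinarith [sq_nonneg p.2.1]
    · have : p.2.1 ^ 2 > 0 := by positivity
      nlinarith [sq_nonneg p.1]
  have hr : 0 < rad p := Real.sqrt_pos.2 hsq
  have hr2 : rad p ^ 2 = p.1 ^ 2 + p.2.1 ^ 2 := Real.sq_sqrt hsq.le
  -- decomposition identities
  have hdec : ∀ F : Pt → ℝ, ∀ γ : Fin 3,
      pd γ F p = GF ci p γ F + chiF ci p γ * pd 0 F p := by
    intro F
    refine fin3cases ?_ ?_ ?_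
    · simp [GF, chiF]
    · have hz : Zd ci 1 F p = ci * pd 1 F p + (p.1 / rad p) * pd 0 F p := by simp [Zd]
      simp only [GF, chiF]
      rw [if_neg (show ¬(1 : Fin 3) = 0 by decide), hz]
      simp only [Matrix.cons_val_one, Matrix.head_cons, Matrix.cons_val_zero]
      field_simp
      ring
    · have hz : Zd ci 2 F p = ci * pd 2 F p + (p.2.1 / rad p) * pd 0 F p := by simp [Zd]
      simp only [GF, chiF]
      rw [if_neg (show ¬(2 : Fin 3) = 0 by decide), hz]
      simp only [Matrix.cons_val_two, Matrix.tail_cons, Matrix.head_cons]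
      field_simp
      ring
  have hcone : (chiF ci p 0) ^ 2 = ci ^ 2 * ((chiF ci p 1) ^ 2 + (chiF ci p 2) ^ 2) := by
    simp only [chiF, Matrix.cons_val_zero, Matrix.cons_val_one, Matrix.head_cons,
      Matrix.cons_val_two, Matrix.tail_cons]
    field_simp
    nlinarith [hr2]
  have hnull0 := ht (chiF ci p) hcone
  have hW2 : ∀ α β : Fin 3, pd α (pd β W) p
      = GF ci p α (pd β W) + chiF ci p α * (GF ci p β (pd 0 W)
        + chiF ci p β * pd 0 (pd 0 W) p) := by
    intro α β
    rw [hdec (pd β W) α, pd_comm hs hW hp 0 β, hdec (pd 0 W) β]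
  have key : NF t V W p = ∑ α : Fin 3, ∑ β : Fin 3, ∑ γ : Fin 3, t α β γ *
      (GF ci p γ V * pd α (pd β W) p
        + chiF ci p γ * pd 0 V p * GF ci p α (pd β W)
        + chiF ci p γ * chiF ci p α * pd 0 V p * GF ci p β (pd 0 W)) := by
    have hterm : ∀ α β γ : Fin 3, t α β γ * pd γ V p * pd α (pd β W) p
        = t α β γ * (GF ci p γ V * pd α (pd β W) p
            + chiF ci p γ * pd 0 V p * GF ci p α (pd β W)
            + chiF ci p γ * chiF ci p α * pd 0 V p * GF ci p β (pd 0 W))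
          + (t α β γ * chiF ci p α * chiF ci p β * chiF ci p γ)
            * (pd 0 V p * pd 0 (pd 0 W) p) := by
      intro α β γ
      linear_combination (t α β γ * pd α (pd β W) p) * hdec V γ
        + (t α β γ * chiF ci p γ * pd 0 V p) * hW2 α β
    rw [NF]
    simp only [hterm]
    simp only [Finset.sum_add_distrib]
    have hpull : ∑ α : Fin 3, ∑ β : Fin 3, ∑ γ : Fin 3,
        (t α β γ * chiF ci p α * chiF ci p β * chiF ci p γ) * (pd 0 V p * pd 0 (pd 0 W) p)
        = (∑ α : Fin 3, ∑ β : Fin 3, ∑ γ : Fin 3,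
            t α β γ * chiF ci p α * chiF ci p β * chiF ci p γ) * (pd 0 V p * pd 0 (pd 0 W) p) := by
      simp [Finset.sum_mul]
    rw [hpull, hnull0, zero_mul, add_zero]
  -- abbreviations
  set A := Znorm ci V p with hA_def
  set B := ∑ α : Fin 3, ∑ β : Fin 3, |pd α (pd β W) p| with hB_def
  set D := ∑ γ : Fin 3, |pd γ V p| with hD_def
  set E := ∑ γ : Fin 3, Znorm ci (pd γ W) p with hE_def
  set M := max 1 (1/ci) with hM_def
  have hM0 : (0:ℝ) ≤ M := le_trans zero_le_one (le_max_left _ _)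
  have hM1 : (1:ℝ) ≤ M := le_max_left _ _
  have hci' : (0:ℝ) < 1 / ci := by positivity
  have hA0 : 0 ≤ A := Znorm_nonneg ci V p
  have hB0 : 0 ≤ B := Finset.sum_nonneg fun α _ => Finset.sum_nonneg fun β _ => abs_nonneg _
  have hD0 : 0 ≤ D := Finset.sum_nonneg fun γ _ => abs_nonneg _
  have hE0 : 0 ≤ E := Finset.sum_nonneg fun γ _ => Znorm_nonneg _ _ _
  -- factor bounds
  have hZA : ∀ γ : Fin 3, γ ≠ 0 → |Zd ci γ V p| ≤ A := by
    intro γ hγ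
    rw [hA_def, Znorm]
    refine fin3cases (P := fun γ => γ ≠ 0 → |Zd ci γ V p| ≤ |Zd ci 1 V p| + |Zd ci 2 V p|)
      ?_ ?_ ?_ γ hγ
    · intro h; exact absurd rfl h
    · intro _; exact le_add_of_nonneg_right (abs_nonneg _)
    · intro _; exact le_add_of_nonneg_left (abs_nonneg _)
  have hGV : ∀ γ, |GF ci p γ V| ≤ (1/ci) * A := by
    refine fin3cases ?_ ?_ ?_
    · rw [show GF ci p 0 V = 0 from by simp [GF], abs_zero]
      positivity
    · rw [show GF ci p 1 V = Zd ci 1 V p / ci from by simp [GF], abs_div, abs_of_pos hci,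
        show (1/ci) * A = A / ci from by ring]
      gcongr
      exact hZA 1 (by decide)
    · rw [show GF ci p 2 V = Zd ci 2 V p / ci from by simp [GF], abs_div, abs_of_pos hci,
        show (1/ci) * A = A / ci from by ring]
      gcongr
      exact hZA 2 (by decide)
  have hZE : ∀ γ : Fin 3, ∀ β : Fin 3, γ ≠ 0 → |Zd ci γ (pd β W) p| ≤ E := by
    intro γ β hγ
    have h1 : |Zd ci γ (pd β W) p| ≤ Znorm ci (pd β W) p := by
      rw [Znorm]
      refine fin3cases (P := fun γ => γ ≠ 0 →
          |Zd ci γ (pd β W) p| ≤ |Zd ci 1 (pd β W) p| + |Zd ci 2 (pd β W) p|) ?_ ?_ ?_ γ hγ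
      · intro h; exact absurd rfl h
      · intro _; exact le_add_of_nonneg_right (abs_nonneg _)
      · intro _; exact le_add_of_nonneg_left (abs_nonneg _)
    refine h1.trans ?_
    rw [hE_def]
    exact Finset.single_le_sum (f := fun γ => Znorm ci (pd γ W) p)
      (fun i _ => Znorm_nonneg _ _ _) (Finset.mem_univ β)
  have hGW : ∀ α β : Fin 3, |GF ci p α (pd β W)| ≤ (1/ci) * E := by
    intro α β
    refine fin3cases (P := fun α => |GF ci p α (pd β W)| ≤ (1/ci) * E) ?_ ?_ ?_ α
    · beta_reduce
      rw [show GF ci p 0 (pd β W) = 0 from by simp [GF], abs_zero]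
      positivity
    · beta_reduce
      rw [show GF ci p 1 (pd β W) = Zd ci 1 (pd β W) p / ci from by simp [GF], abs_div,
        abs_of_pos hci, show (1/ci) * E = E / ci from by ring]
      gcongr
      exact hZE 1 β (by decide)
    · beta_reduce
      rw [show GF ci p 2 (pd β W) = Zd ci 2 (pd β W) p / ci from by simp [GF], abs_div,
        abs_of_pos hci, show (1/ci) * E = E / ci from by ring]
      gcongr
      exact hZE 2 β (by decide)
  have habs1 : |p.1| ≤ rad p := by
    rw [show |p.1| = Real.sqrt (p.1 ^ 2) from (Real.sqrt_sq_eq_abs _).symm]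
    exact Real.sqrt_le_sqrt (le_add_of_nonneg_right (sq_nonneg p.2.1))
  have habs2 : |p.2.1| ≤ rad p := by
    rw [show |p.2.1| = Real.sqrt (p.2.1 ^ 2) from (Real.sqrt_sq_eq_abs _).symm]
    exact Real.sqrt_le_sqrt (le_add_of_nonneg_left (sq_nonneg p.1))
  have hchi : ∀ γ, |chiF ci p γ| ≤ M := by
    refine fin3cases ?_ ?_ ?_
    · rw [show chiF ci p 0 = 1 from by simp [chiF], abs_one]
      exact hM1
    · rw [show chiF ci p 1 = -(p.1 / rad p) / ci from by simp [chiF], abs_div, abs_neg,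
        abs_div, abs_of_pos hr, abs_of_pos hci]
      refine le_trans ?_ (le_max_right 1 (1/ci))
      rw [div_div, div_le_div_iff₀ (by positivity) (by positivity)]
      nlinarith [habs1, hci.le, hr.le]
    · rw [show chiF ci p 2 = -(p.2.1 / rad p) / ci from by simp [chiF], abs_div, abs_neg,
        abs_div, abs_of_pos hr, abs_of_pos hci]
      refine le_trans ?_ (le_max_right 1 (1/ci))
      rw [div_div, div_le_div_iff₀ (by positivity) (by positivity)]
      nlinarith [habs2, hci.le, hr.le]
  have hBb : ∀ α β : Fin 3, |pd α (pd β W) p| ≤ B := by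
    intro α β
    rw [hB_def]
    have h1 : |pd α (pd β W) p| ≤ ∑ β' : Fin 3, |pd α (pd β' W) p| :=
      Finset.single_le_sum (f := fun β' => |pd α (pd β' W) p|)
        (fun i _ => abs_nonneg _) (Finset.mem_univ β)
    refine h1.trans ?_
    exact Finset.single_le_sum (f := fun α => ∑ β' : Fin 3, |pd α (pd β' W) p|)
      (fun i _ => Finset.sum_nonneg fun _ _ => abs_nonneg _) (Finset.mem_univ α)
  have hDb : |pd 0 V p| ≤ D := by
    rw [hD_def]
    exact Finset.single_le_sum (f := fun γ => |pd γ V p|) (fun i _ => abs_nonneg _)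
      (Finset.mem_univ 0)
  -- per-term bound
  set K : ℝ := (1/ci) * A * B + M * D * ((1/ci) * E) + M * (M * (D * ((1/ci) * E))) with hK_def
  have hterm_bd : ∀ α β γ : Fin 3, |t α β γ *
      (GF ci p γ V * pd α (pd β W) p
        + chiF ci p γ * pd 0 V p * GF ci p α (pd β W)
        + chiF ci p γ * chiF ci p α * pd 0 V p * GF ci p β (pd 0 W))| ≤ |t α β γ| * K := by
    intro α β γ
    rw [abs_mul]
    refine mul_le_mul_of_nonneg_left ?_ (abs_nonneg _)
    have hX : |GF ci p γ V * pd α (pd β W) p| ≤ (1/ci) * A * B := by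
      rw [abs_mul]
      exact mul_le_mul (hGV γ) (hBb α β) (abs_nonneg _) (by positivity)
    have hY : |chiF ci p γ * pd 0 V p * GF ci p α (pd β W)| ≤ M * D * ((1/ci) * E) := by
      rw [abs_mul, abs_mul]
      have h1 : |chiF ci p γ| * |pd 0 V p| ≤ M * D :=
        mul_le_mul (hchi γ) hDb (abs_nonneg _) hM0
      exact mul_le_mul h1 (hGW α β) (abs_nonneg _) (by positivity)
    have hZ : |chiF ci p γ * chiF ci p α * pd 0 V p * GF ci p β (pd 0 W)|
        ≤ M * (M * (D * ((1/ci) * E))) := by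
      rw [abs_mul, abs_mul, abs_mul]
      have h2 : |pd 0 V p| * |GF ci p β (pd 0 W)| ≤ D * ((1/ci) * E) :=
        mul_le_mul hDb (hGW β 0) (abs_nonneg _) hD0
      have h3 : |chiF ci p α| * (|pd 0 V p| * |GF ci p β (pd 0 W)|)
          ≤ M * (D * ((1/ci) * E)) :=
        mul_le_mul (hchi α) h2 (by positivity) hM0
      calc |chiF ci p γ| * |chiF ci p α| * |pd 0 V p| * |GF ci p β (pd 0 W)|
          = |chiF ci p γ| * (|chiF ci p α| * (|pd 0 V p| * |GF ci p β (pd 0 W)|)) := by ring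
        _ ≤ M * (M * (D * ((1/ci) * E))) :=
            mul_le_mul (hchi γ) h3 (by positivity) hM0
    calc |GF ci p γ V * pd α (pd β W) p
        + chiF ci p γ * pd 0 V p * GF ci p α (pd β W)
        + chiF ci p γ * chiF ci p α * pd 0 V p * GF ci p β (pd 0 W)|
        ≤ |GF ci p γ V * pd α (pd β W) p
            + chiF ci p γ * pd 0 V p * GF ci p α (pd β W)|
          + |chiF ci p γ * chiF ci p α * pd 0 V p * GF ci p β (pd 0 W)| := abs_add_le _ _
      _ ≤ |GF ci p γ V * pd α (pd β W) p|
          + |chiF ci p γ * pd 0 V p * GF ci p α (pd β W)|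
          + |chiF ci p γ * chiF ci p α * pd 0 V p * GF ci p β (pd 0 W)| := by
            have := abs_add_le (GF ci p γ V * pd α (pd β W) p)
              (chiF ci p γ * pd 0 V p * GF ci p α (pd β W))
            linarith
      _ ≤ K := by rw [hK_def]; linarith [hX, hY, hZ]
  -- assemble
  have hsum : |NF t V W p| ≤ ∑ α : Fin 3, ∑ β : Fin 3, ∑ γ : Fin 3, |t α β γ| * K := by
    rw [key]
    calc |∑ α : Fin 3, ∑ β : Fin 3, ∑ γ : Fin 3, t α β γ *
        (GF ci p γ V * pd α (pd β W) p
          + chiF ci p γ * pd 0 V p * GF ci p α (pd β W)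
          + chiF ci p γ * chiF ci p α * pd 0 V p * GF ci p β (pd 0 W))|
        ≤ ∑ α : Fin 3, |∑ β : Fin 3, ∑ γ : Fin 3, t α β γ *
            (GF ci p γ V * pd α (pd β W) p
              + chiF ci p γ * pd 0 V p * GF ci p α (pd β W)
              + chiF ci p γ * chiF ci p α * pd 0 V p * GF ci p β (pd 0 W))| :=
          Finset.abs_sum_le_sum_abs _ _
      _ ≤ ∑ α : Fin 3, ∑ β : Fin 3, |∑ γ : Fin 3, t α β γ *
            (GF ci p γ V * pd α (pd β W) p
              + chiF ci p γ * pd 0 V p * GF ci p α (pd β W)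
              + chiF ci p γ * chiF ci p α * pd 0 V p * GF ci p β (pd 0 W))| :=
          Finset.sum_le_sum fun α _ => Finset.abs_sum_le_sum_abs _ _
      _ ≤ ∑ α : Fin 3, ∑ β : Fin 3, ∑ γ : Fin 3, |t α β γ *
            (GF ci p γ V * pd α (pd β W) p
              + chiF ci p γ * pd 0 V p * GF ci p α (pd β W)
              + chiF ci p γ * chiF ci p α * pd 0 V p * GF ci p β (pd 0 W))| :=
          Finset.sum_le_sum fun α _ => Finset.sum_le_sum fun β _ =>
            Finset.abs_sum_le_sum_abs _ _
      _ ≤ ∑ α : Fin 3, ∑ β : Fin 3, ∑ γ : Fin 3, |t α β γ| * K :=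
          Finset.sum_le_sum fun α _ => Finset.sum_le_sum fun β _ =>
            Finset.sum_le_sum fun γ _ => hterm_bd α β γ
  refine hsum.trans ?_
  rw [show (∑ α : Fin 3, ∑ β : Fin 3, ∑ γ : Fin 3, |t α β γ| * K)
      = (∑ α : Fin 3, ∑ β : Fin 3, ∑ γ : Fin 3, |t α β γ|) * K from by simp [Finset.sum_mul]]
  rw [CtF]
  have hts : (0:ℝ) ≤ ∑ α : Fin 3, ∑ β : Fin 3, ∑ γ : Fin 3, |t α β γ| :=
    Finset.sum_nonneg fun α _ => Finset.sum_nonneg fun β _ => Finset.sum_nonneg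
      fun γ _ => abs_nonneg _
  rw [mul_assoc]
  refine mul_le_mul_of_nonneg_left ?_ hts
  rw [hK_def]
  have hAB : 0 ≤ A * B := mul_nonneg hA0 hB0
  have hDE : 0 ≤ D * E := mul_nonneg hD0 hE0
  nlinarith [mul_nonneg (mul_nonneg hM0 hM0) hDE, mul_nonneg hM0 hDE, hci'.le,
    mul_nonneg hci'.le hAB, mul_nonneg hci'.le hDE,
    mul_nonneg (mul_nonneg hci'.le hM0) hDE,
    mul_nonneg (mul_nonneg (mul_nonneg hci'.le hM0) hM0) hDE,
    mul_le_mul_of_nonneg_right hM1 (mul_nonneg hci'.le hAB)]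

end ptwise

/-! ### list sum helpers -/

def lsum {α : Type*} (L : List α) (f : α → ℝ) : ℝ := (L.map f).sum

theorem lsum_cons {α : Type*} (e : α) (L : List α) (f : α → ℝ) :
    lsum (e :: L) f = f e + lsum L f := by simp [lsum]

theorem lsum_nonneg {α : Type*} {L : List α} {f : α → ℝ} (h : ∀ e ∈ L, 0 ≤ f e) :
    0 ≤ lsum L f := by
  induction L with
  | nil => simp [lsum]
  | cons e L ih =>
      rw [lsum_cons]
      exact add_nonneg (h e (List.mem_cons_self))
        (ih fun e' he' => h e' (List.mem_cons_of_mem e he'))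

theorem lsum_congr {α : Type*} {L : List α} {f g : α → ℝ} (h : ∀ e ∈ L, f e = g e) :
    lsum L f = lsum L g := by
  induction L with
  | nil => rfl
  | cons e L ih =>
      rw [lsum_cons, lsum_cons, h e (List.mem_cons_self),
        ih fun e' he' => h e' (List.mem_cons_of_mem e he')]

theorem lsum_add {α : Type*} (L : List α) (f g : α → ℝ) :
    lsum L f + lsum L g = lsum L (fun e => f e + g e) := by
  induction L with
  | nil => simp [lsum]
  | cons e L ih => rw [lsum_cons, lsum_cons, lsum_cons, ← ih]; ring

theorem lsum_abs {α : Type*} (L : List α) (f : α → ℝ) :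
    |lsum L f| ≤ lsum L (fun e => |f e|) := by
  induction L with
  | nil => simp [lsum]
  | cons e L ih =>
      rw [lsum_cons, lsum_cons]
      exact (abs_add_le _ _).trans (by linarith)

/-- Workhorse: `Z * |∑ f| ≤ (∑ wt) * S`. -/
theorem lsum_bound {α : Type*} {L : List α} {f wt : α → ℝ} {Z S : ℝ} (hZ : 0 ≤ Z)
    (h : ∀ e ∈ L, Z * |f e| ≤ wt e * S) : Z * |lsum L f| ≤ lsum L wt * S := by
  induction L with
  | nil => simp [lsum]
  | cons e L ih =>
      rw [lsum_cons, lsum_cons, add_mul]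
      have h1 : Z * |f e + lsum L f| ≤ Z * (|f e| + |lsum L f|) :=
        mul_le_mul_of_nonneg_left (abs_add_le _ _) hZ
      have h2 := h e (List.mem_cons_self)
      have h3 := ih fun e' he' => h e' (List.mem_cons_of_mem e he')
      nlinarith [hZ, abs_nonneg (lsum L f)]

/-- Workhorse: `Z * (∑ g) ≤ (∑ wt) * S` (no absolute values). -/
theorem lsum_mul_bound {α : Type*} {L : List α} {g wt : α → ℝ} {Z S : ℝ}
    (h : ∀ e ∈ L, Z * g e ≤ wt e * S) : Z * lsum L g ≤ lsum L wt * S := by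
  induction L with
  | nil => simp [lsum]
  | cons e L ih =>
      rw [lsum_cons, lsum_cons, add_mul, mul_add]
      exact add_le_add (h e (List.mem_cons_self))
        (ih fun e' he' => h e' (List.mem_cons_of_mem e he'))

/-- Workhorse: `(∑ f) * F ≤ (∑ wt) * S`. -/
theorem lsum_prod_bound {α : Type*} {L : List α} {f wt : α → ℝ} {F S : ℝ}
    (h : ∀ e ∈ L, f e * F ≤ wt e * S) : lsum L f * F ≤ lsum L wt * S := by
  induction L with
  | nil => simp [lsum]
  | cons e L ih =>
      rw [lsum_cons, lsum_cons, add_mul, add_mul]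
      exact add_le_add (h e (List.mem_cons_self))
        (ih fun e' he' => h e' (List.mem_cons_of_mem e he'))

theorem Ev1_eq_lsum (Lst : List E1) (u : Pt → ℝ) (p : Pt) :
    Ev1 Lst u p = lsum Lst (fun e => e.1 * GamPow e.2.1 (pd e.2.2 u) p) := rfl

theorem Ev2_eq_lsum (Lst : List E2) (v w : Pt → ℝ) (p : Pt) :
    Ev2 Lst v w p
      = lsum Lst (fun e => e.1 * NF e.2.1 (GamPow e.2.2.1 v) (GamPow e.2.2.2 w) p) := rfl

/-! ### membership lemmas -/

theorem mem_MIdx {k : ℕ} {b : Fin 5 → ℕ} : b ∈ MIdx k ↔ (∑ j, b j) ≤ k := by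
  simp only [MIdx, Finset.mem_biUnion, Finset.mem_range, Finset.Nat.mem_antidiagonalTuple]
  constructor
  · rintro ⟨n, hn, rfl⟩; omega
  · intro h; exact ⟨∑ j, b j, by omega, rfl⟩

theorem mem_pairIdx {m : ℕ} {b c : Fin 5 → ℕ} (hb : (∑ j, b j) ≤ m) (hc : (∑ j, c j) ≤ m)
    (hbc : (∑ j, b j) + (∑ j, c j) ≤ m) : (b, c) ∈ pairIdx m := by
  rw [pairIdx, Finset.mem_filter, Finset.mem_product]
  exact ⟨⟨mem_MIdx.2 hb, mem_MIdx.2 hc⟩, hbc⟩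


set_option maxHeartbeats 2000000 in
/-- null-form estimate for the quasilinear quadratic terms (Proposition 2.1, (2.9)). -/
theorem stmt3 (k : ℕ) (hk : 0 < k) (ci : ℝ) (hci : 0 < ci)
    (a : Fin 3 → Fin 3 → Fin 3 → ℝ)
    (hnull : ∀ X : Fin 3 → ℝ, (X 0) ^ 2 = ci ^ 2 * ((X 1) ^ 2 + (X 2) ^ 2) →
      ∑ α : Fin 3, ∑ β : Fin 3, ∑ γ : Fin 3, a α β γ * X α * X β * X γ = 0) :
    ∃ C : ℝ, 0 < C ∧ ∀ T : ℝ, 1 < T → ∀ v w : Pt → ℝ,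
      ContDiffOn ℝ (⊤ : ℕ∞) v {p : Pt | p.2.2 < T} → ContDiffOn ℝ (⊤ : ℕ∞) w {p : Pt | p.2.2 < T} →
      ∀ p : Pt, ¬(p.1 = 0 ∧ p.2.1 = 0) → 0 ≤ p.2.2 → p.2.2 < T →
        ptNorm k (fun q => ∑ α : Fin 3, ∑ β : Fin 3, ∑ γ : Fin 3,
            a α β γ * pd γ v q * pd α (pd β w) q) p
          ≤ C * ∑ bc ∈ pairIdx (k + 1),
              (Znorm ci (GamPow bc.1 v) p *
                  (∑ α : Fin 3, ∑ β : Fin 3, |GamPow bc.2 (pd α (pd β w)) p|)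
                + (∑ α : Fin 3, |GamPow bc.1 (pd α v) p|) *
                  (∑ γ : Fin 3, Znorm ci (GamPow bc.2 (pd γ w)) p)) := by
  classical
  have ht : NullT ci a := hnull
  choose Lst2 hLst2 hLst2eq using gamPow_NF ci a ht
  choose Lst1 hLst1 hLst1eq using fun bc : (Fin 5 → ℕ) × Fin 3 => pd_gamPow bc.1 bc.2
  set w2f : (Fin 5 → ℕ) → ℝ := fun c => ∑ γ : Fin 3, lsum (Lst1 (c, γ)) (fun e => |e.1|)
    with hw2f_def
  set W1 : (Fin 5 → ℕ) → ℝ := fun c => ∑ α : Fin 3, ∑ β : Fin 3,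
      lsum (Lst1 (c, β)) (fun e1 => |e1.1| * lsum (Lst1 (e1.2.1, α)) (fun e2 => |e2.1|))
    with hW1_def
  set W2 : (Fin 5 → ℕ) → (Fin 5 → ℕ) → ℝ := fun b c =>
      ∑ γ : Fin 3, lsum (Lst1 (b, γ)) (fun e => |e.1| * w2f c) with hW2_def
  set C0 : ℝ := ∑ a' ∈ MIdx k, lsum (Lst2 a')
      (fun e => |e.1| * (CtF ci e.2.1 * (W1 e.2.2.2 + W2 e.2.2.1 e.2.2.2))) with hC0_def
  have hw2f0 : ∀ c, 0 ≤ w2f c := fun c =>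
    Finset.sum_nonneg fun γ _ => lsum_nonneg fun e _ => abs_nonneg _
  have hW10 : ∀ c, 0 ≤ W1 c := fun c =>
    Finset.sum_nonneg fun α _ => Finset.sum_nonneg fun β _ => lsum_nonneg fun e1 _ =>
      mul_nonneg (abs_nonneg _) (lsum_nonneg fun e2 _ => abs_nonneg _)
  have hW20 : ∀ b c, 0 ≤ W2 b c := fun b c =>
    Finset.sum_nonneg fun γ _ => lsum_nonneg fun e _ =>
      mul_nonneg (abs_nonneg _) (hw2f0 c)
  have hC00 : 0 ≤ C0 := Finset.sum_nonneg fun a' _ => lsum_nonneg fun e _ =>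
    mul_nonneg (abs_nonneg _) (mul_nonneg (CtF_nonneg hci _)
      (add_nonneg (hW10 _) (hW20 _ _)))
  refine ⟨C0 + 1, by linarith, ?_⟩
  intro T hT v w hv hw p hx ht0 htT
  set s : Set Pt := {p : Pt | p.2.2 < T} with hs_def
  have hs : IsOpen s := isOpen_lt (continuous_snd.comp continuous_snd) continuous_const
  have hp : p ∈ s := htT
  set S : ℝ := ∑ bc ∈ pairIdx (k + 1),
      (Znorm ci (GamPow bc.1 v) p *
          (∑ α : Fin 3, ∑ β : Fin 3, |GamPow bc.2 (pd α (pd β w)) p|)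
        + (∑ α : Fin 3, |GamPow bc.1 (pd α v) p|) *
          (∑ γ : Fin 3, Znorm ci (GamPow bc.2 (pd γ w)) p)) with hS_def
  have hterm0 : ∀ b c : Fin 5 → ℕ,
      0 ≤ Znorm ci (GamPow b v) p *
          (∑ α : Fin 3, ∑ β : Fin 3, |GamPow c (pd α (pd β w)) p|)
        ∧ 0 ≤ (∑ α : Fin 3, |GamPow b (pd α v) p|) *
          (∑ γ : Fin 3, Znorm ci (GamPow c (pd γ w)) p) := by
    intro b c
    constructor
    · exact mul_nonneg (Znorm_nonneg _ _ _) (Finset.sum_nonneg fun α _ =>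
        Finset.sum_nonneg fun β _ => abs_nonneg _)
    · exact mul_nonneg (Finset.sum_nonneg fun α _ => abs_nonneg _)
        (Finset.sum_nonneg fun γ _ => Znorm_nonneg _ _ _)
  have hS0 : 0 ≤ S :=
    Finset.sum_nonneg fun bc _ => add_nonneg (hterm0 bc.1 bc.2).1 (hterm0 bc.1 bc.2).2
  have hfullterm : ∀ b c : Fin 5 → ℕ, (b, c) ∈ pairIdx (k+1) →
      Znorm ci (GamPow b v) p *
          (∑ α : Fin 3, ∑ β : Fin 3, |GamPow c (pd α (pd β w)) p|)
        + (∑ α : Fin 3, |GamPow b (pd α v) p|) *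
          (∑ γ : Fin 3, Znorm ci (GamPow c (pd γ w)) p) ≤ S := by
    intro b c hmem
    rw [hS_def]
    exact Finset.single_le_sum (f := fun bc : (Fin 5 → ℕ) × (Fin 5 → ℕ) =>
      Znorm ci (GamPow bc.1 v) p *
        (∑ α : Fin 3, ∑ β : Fin 3, |GamPow bc.2 (pd α (pd β w)) p|)
      + (∑ α : Fin 3, |GamPow bc.1 (pd α v) p|) *
        (∑ γ : Fin 3, Znorm ci (GamPow bc.2 (pd γ w)) p))
      (fun bc _ => add_nonneg (hterm0 bc.1 bc.2).1 (hterm0 bc.1 bc.2).2) hmem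
  -- KEY1
  have KEY1 : ∀ b c : Fin 5 → ℕ, (∑ j, b j) + (∑ j, c j) ≤ k →
      Znorm ci (GamPow b v) p *
        (∑ α : Fin 3, ∑ β : Fin 3, |pd α (pd β (GamPow c w)) p|) ≤ W1 c * S := by
    intro b c hbc
    set Z := Znorm ci (GamPow b v) p with hZ_def
    have hZ0 : 0 ≤ Z := Znorm_nonneg _ _ _
    have hinner : ∀ (c2 : Fin 5 → ℕ) (δ2 δ1 : Fin 3), (∑ j, c2 j) ≤ (∑ j, c j) →
        Z * |GamPow c2 (pd δ2 (pd δ1 w)) p| ≤ S := by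
      intro c2 δ2 δ1 hc2
      have hmem : (b, c2) ∈ pairIdx (k+1) := mem_pairIdx (by omega) (by omega) (by omega)
      have hone : |GamPow c2 (pd δ2 (pd δ1 w)) p|
          ≤ ∑ α : Fin 3, ∑ β : Fin 3, |GamPow c2 (pd α (pd β w)) p| := by
        have h1 : |GamPow c2 (pd δ2 (pd δ1 w)) p|
            ≤ ∑ β : Fin 3, |GamPow c2 (pd δ2 (pd β w)) p| :=
          Finset.single_le_sum (f := fun β => |GamPow c2 (pd δ2 (pd β w)) p|)
            (fun i _ => abs_nonneg _) (Finset.mem_univ δ1)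
        refine h1.trans ?_
        exact Finset.single_le_sum (f := fun α => ∑ β : Fin 3, |GamPow c2 (pd α (pd β w)) p|)
          (fun i _ => Finset.sum_nonneg fun _ _ => abs_nonneg _) (Finset.mem_univ δ2)
      calc Z * |GamPow c2 (pd δ2 (pd δ1 w)) p|
          ≤ Z * ∑ α : Fin 3, ∑ β : Fin 3, |GamPow c2 (pd α (pd β w)) p| :=
            mul_le_mul_of_nonneg_left hone hZ0
        _ ≤ Z * (∑ α : Fin 3, ∑ β : Fin 3, |GamPow c2 (pd α (pd β w)) p|)
            + (∑ α : Fin 3, |GamPow b (pd α v) p|) *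
              (∑ γ : Fin 3, Znorm ci (GamPow c2 (pd γ w)) p) :=
            le_add_of_nonneg_right (hterm0 b c2).2
        _ ≤ S := hfullterm b c2 hmem
    have hexp : ∀ α β : Fin 3, pd α (pd β (GamPow c w)) p
        = lsum (Lst1 (c, β)) (fun e1 => e1.1 * Ev1 (Lst1 (e1.2.1, α)) (pd e1.2.2 w) p) := by
      intro α β
      have h1 : pd α (pd β (GamPow c w)) p = pd α (fun q => Ev1 (Lst1 (c, β)) w q) p :=
        pd_congr hs (fun q hq => hLst1eq (c, β) s hs w hw q hq) hp α
      rw [h1, pd_Ev1 hs hw hp α]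
      show lsum _ _ = lsum _ _
      refine lsum_congr fun e1 he1 => ?_
      rw [hLst1eq (e1.2.1, α) s hs (pd e1.2.2 w) (pd_smooth hs hw e1.2.2) p hp]
    have hab : ∀ α β : Fin 3, Z * |pd α (pd β (GamPow c w)) p|
        ≤ lsum (Lst1 (c, β))
            (fun e1 => |e1.1| * lsum (Lst1 (e1.2.1, α)) (fun e2 => |e2.1|)) * S := by
      intro α β
      rw [hexp α β]
      refine lsum_bound hZ0 ?_
      intro e1 he1
      have hin : Z * |Ev1 (Lst1 (e1.2.1, α)) (pd e1.2.2 w) p|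
          ≤ lsum (Lst1 (e1.2.1, α)) (fun e2 => |e2.1|) * S := by
        rw [Ev1_eq_lsum]
        refine lsum_bound hZ0 ?_
        intro e2 he2
        have hsum2 : (∑ j, e2.2.1 j) ≤ (∑ j, c j) :=
          le_trans (hLst1 (e1.2.1, α) e2 he2) (hLst1 (c, β) e1 he1)
        calc Z * |e2.1 * GamPow e2.2.1 (pd e2.2.2 (pd e1.2.2 w)) p|
            = |e2.1| * (Z * |GamPow e2.2.1 (pd e2.2.2 (pd e1.2.2 w)) p|) := by
              rw [abs_mul]; ring
          _ ≤ |e2.1| * S :=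
              mul_le_mul_of_nonneg_left (hinner e2.2.1 e2.2.2 e1.2.2 hsum2) (abs_nonneg _)
      calc Z * |e1.1 * Ev1 (Lst1 (e1.2.1, α)) (pd e1.2.2 w) p|
          = |e1.1| * (Z * |Ev1 (Lst1 (e1.2.1, α)) (pd e1.2.2 w) p|) := by rw [abs_mul]; ring
        _ ≤ |e1.1| * (lsum (Lst1 (e1.2.1, α)) (fun e2 => |e2.1|) * S) :=
            mul_le_mul_of_nonneg_left hin (abs_nonneg _)
        _ = (|e1.1| * lsum (Lst1 (e1.2.1, α)) (fun e2 => |e2.1|)) * S := by ring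
    calc Z * (∑ α : Fin 3, ∑ β : Fin 3, |pd α (pd β (GamPow c w)) p|)
        = ∑ α : Fin 3, ∑ β : Fin 3, Z * |pd α (pd β (GamPow c w)) p| := by
          simp [Finset.mul_sum]
      _ ≤ ∑ α : Fin 3, ∑ β : Fin 3, lsum (Lst1 (c, β))
            (fun e1 => |e1.1| * lsum (Lst1 (e1.2.1, α)) (fun e2 => |e2.1|)) * S :=
          Finset.sum_le_sum fun α _ => Finset.sum_le_sum fun β _ => hab α β
      _ = W1 c * S := by rw [hW1_def]; simp [Finset.sum_mul]
  -- KEY2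
  have KEY2 : ∀ b c : Fin 5 → ℕ, (∑ j, b j) + (∑ j, c j) ≤ k →
      (∑ γ : Fin 3, |pd γ (GamPow b v) p|) *
        (∑ γ : Fin 3, Znorm ci (pd γ (GamPow c w)) p) ≤ W2 b c * S := by
    intro b c hbc
    set F2 := ∑ γ : Fin 3, Znorm ci (pd γ (GamPow c w)) p with hF2_def
    have hF20 : 0 ≤ F2 := Finset.sum_nonneg fun γ _ => Znorm_nonneg _ _ _
    have hPQ : ∀ b' c' : Fin 5 → ℕ, (∑ j, b' j) ≤ ∑ j, b j → (∑ j, c' j) ≤ ∑ j, c j →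
        (∑ γ : Fin 3, |GamPow b' (pd γ v) p|) *
          (∑ γ : Fin 3, Znorm ci (GamPow c' (pd γ w)) p) ≤ S := by
      intro b' c' h1 h2
      have hmem : (b', c') ∈ pairIdx (k+1) := mem_pairIdx (by omega) (by omega) (by omega)
      calc (∑ γ : Fin 3, |GamPow b' (pd γ v) p|) *
            (∑ γ : Fin 3, Znorm ci (GamPow c' (pd γ w)) p)
          ≤ Znorm ci (GamPow b' v) p *
              (∑ α : Fin 3, ∑ β : Fin 3, |GamPow c' (pd α (pd β w)) p|)
            + (∑ α : Fin 3, |GamPow b' (pd α v) p|) *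
              (∑ γ : Fin 3, Znorm ci (GamPow c' (pd γ w)) p) :=
            le_add_of_nonneg_left (hterm0 b' c').1
        _ ≤ S := hfullterm b' c' hmem
    have hZnγ : ∀ γ : Fin 3, Znorm ci (pd γ (GamPow c w)) p
        ≤ lsum (Lst1 (c, γ)) (fun e => |e.1| * Znorm ci (GamPow e.2.1 (pd e.2.2 w)) p) := by
      intro γ
      have hZd : ∀ α : Fin 3, Zd ci α (pd γ (GamPow c w)) p
          = lsum (Lst1 (c, γ)) (fun e => e.1 * Zd ci α (GamPow e.2.1 (pd e.2.2 w)) p) := by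
        intro α
        have hcongr : Zd ci α (pd γ (GamPow c w)) p
            = Zd ci α (fun q => Ev1 (Lst1 (c, γ)) w q) p := by
          rw [Zd, Zd, pd_congr hs (fun q hq => hLst1eq (c, γ) s hs w hw q hq) hp α,
            pd_congr hs (fun q hq => hLst1eq (c, γ) s hs w hw q hq) hp 0]
        rw [hcongr, Zd_Ev1 hs hw hp ci α]
        rfl
      rw [Znorm, hZd 1, hZd 2]
      calc |lsum (Lst1 (c, γ)) (fun e => e.1 * Zd ci 1 (GamPow e.2.1 (pd e.2.2 w)) p)|
            + |lsum (Lst1 (c, γ)) (fun e => e.1 * Zd ci 2 (GamPow e.2.1 (pd e.2.2 w)) p)|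
          ≤ lsum (Lst1 (c, γ)) (fun e => |e.1 * Zd ci 1 (GamPow e.2.1 (pd e.2.2 w)) p|)
            + lsum (Lst1 (c, γ)) (fun e => |e.1 * Zd ci 2 (GamPow e.2.1 (pd e.2.2 w)) p|) :=
            add_le_add (lsum_abs _ _) (lsum_abs _ _)
        _ = lsum (Lst1 (c, γ)) (fun e => |e.1 * Zd ci 1 (GamPow e.2.1 (pd e.2.2 w)) p|
              + |e.1 * Zd ci 2 (GamPow e.2.1 (pd e.2.2 w)) p|) := lsum_add _ _ _
        _ = lsum (Lst1 (c, γ)) (fun e => |e.1| * Znorm ci (GamPow e.2.1 (pd e.2.2 w)) p) := by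
            refine lsum_congr fun e _ => ?_
            rw [Znorm, abs_mul, abs_mul]
            ring
    rw [Finset.sum_mul]
    have hγbd : ∀ γ : Fin 3, |pd γ (GamPow b v) p| * F2
        ≤ lsum (Lst1 (b, γ)) (fun e => |e.1| * w2f c) * S := by
      intro γ
      rw [hLst1eq (b, γ) s hs v hv p hp, Ev1_eq_lsum]
      refine le_trans (mul_le_mul_of_nonneg_right (lsum_abs _ _) hF20) ?_
      refine lsum_prod_bound ?_
      intro e he
      have hP1 : |GamPow e.2.1 (pd e.2.2 v) p| ≤ ∑ γ' : Fin 3, |GamPow e.2.1 (pd γ' v) p| :=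
        Finset.single_le_sum (f := fun γ' => |GamPow e.2.1 (pd γ' v) p|)
          (fun i _ => abs_nonneg _) (Finset.mem_univ e.2.2)
      have hPF : (∑ γ' : Fin 3, |GamPow e.2.1 (pd γ' v) p|) * F2 ≤ w2f c * S := by
        set P := ∑ γ' : Fin 3, |GamPow e.2.1 (pd γ' v) p| with hP_def
        have hP0 : 0 ≤ P := Finset.sum_nonneg fun _ _ => abs_nonneg _
        have hF2b : F2 ≤ ∑ γ'' : Fin 3, lsum (Lst1 (c, γ''))
            (fun e' => |e'.1| * Znorm ci (GamPow e'.2.1 (pd e'.2.2 w)) p) :=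
          Finset.sum_le_sum fun γ'' _ => hZnγ γ''
        calc P * F2
            ≤ P * ∑ γ'' : Fin 3, lsum (Lst1 (c, γ''))
                (fun e' => |e'.1| * Znorm ci (GamPow e'.2.1 (pd e'.2.2 w)) p) :=
              mul_le_mul_of_nonneg_left hF2b hP0
          _ = ∑ γ'' : Fin 3, P * lsum (Lst1 (c, γ''))
                (fun e' => |e'.1| * Znorm ci (GamPow e'.2.1 (pd e'.2.2 w)) p) :=
              Finset.mul_sum _ _ _
          _ ≤ ∑ γ'' : Fin 3, lsum (Lst1 (c, γ'')) (fun e' => |e'.1|) * S := by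
              refine Finset.sum_le_sum fun γ'' _ => lsum_mul_bound ?_
              intro e' he'
              have hQ1 : Znorm ci (GamPow e'.2.1 (pd e'.2.2 w)) p
                  ≤ ∑ γ3 : Fin 3, Znorm ci (GamPow e'.2.1 (pd γ3 w)) p :=
                Finset.single_le_sum (f := fun γ3 => Znorm ci (GamPow e'.2.1 (pd γ3 w)) p)
                  (fun i _ => Znorm_nonneg _ _ _) (Finset.mem_univ e'.2.2)
              calc P * (|e'.1| * Znorm ci (GamPow e'.2.1 (pd e'.2.2 w)) p)
                  = |e'.1| * (P * Znorm ci (GamPow e'.2.1 (pd e'.2.2 w)) p) := by ring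
                _ ≤ |e'.1| * (P * ∑ γ3 : Fin 3, Znorm ci (GamPow e'.2.1 (pd γ3 w)) p) :=
                    mul_le_mul_of_nonneg_left
                      (mul_le_mul_of_nonneg_left hQ1 hP0) (abs_nonneg _)
                _ ≤ |e'.1| * S := by
                    refine mul_le_mul_of_nonneg_left ?_ (abs_nonneg _)
                    exact hPQ e.2.1 e'.2.1 (hLst1 (b, γ) e he) (hLst1 (c, γ'') e' he')
          _ = w2f c * S := by rw [hw2f_def]; rw [Finset.sum_mul]
      calc |e.1 * GamPow e.2.1 (pd e.2.2 v) p| * F2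
          = |e.1| * (|GamPow e.2.1 (pd e.2.2 v) p| * F2) := by rw [abs_mul]; ring
        _ ≤ |e.1| * ((∑ γ' : Fin 3, |GamPow e.2.1 (pd γ' v) p|) * F2) :=
            mul_le_mul_of_nonneg_left (mul_le_mul_of_nonneg_right hP1 hF20) (abs_nonneg _)
        _ ≤ |e.1| * (w2f c * S) := mul_le_mul_of_nonneg_left hPF (abs_nonneg _)
        _ = (|e.1| * w2f c) * S := by ring
    calc ∑ γ : Fin 3, |pd γ (GamPow b v) p| * F2
        ≤ ∑ γ : Fin 3, lsum (Lst1 (b, γ)) (fun e => |e.1| * w2f c) * S :=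
          Finset.sum_le_sum fun γ _ => hγbd γ
      _ = W2 b c * S := by rw [hW2_def]; rw [Finset.sum_mul]
  -- final assembly
  show ptNorm k (NF a v w) p ≤ (C0 + 1) * S
  have hmain : ∀ a' ∈ MIdx k, |GamPow a' (NF a v w) p|
      ≤ lsum (Lst2 a')
          (fun e => |e.1| * (CtF ci e.2.1 * (W1 e.2.2.2 + W2 e.2.2.1 e.2.2.2))) * S := by
    intro a' ha'
    have hka' : (∑ j, a' j) ≤ k := mem_MIdx.1 ha'
    rw [hLst2eq a' s hs v w hv hw p hp, Ev2_eq_lsum]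
    have h1 : (1:ℝ) * |lsum (Lst2 a')
        (fun e => e.1 * NF e.2.1 (GamPow e.2.2.1 v) (GamPow e.2.2.2 w) p)|
        ≤ lsum (Lst2 a')
          (fun e => |e.1| * (CtF ci e.2.1 * (W1 e.2.2.2 + W2 e.2.2.1 e.2.2.2))) * S := by
      refine lsum_bound zero_le_one ?_
      intro e he
      rw [one_mul, abs_mul]
      have hnulle := (hLst2 a' e he).1
      have hsums := (hLst2 a' e he).2
      have hNFb := NF_pointwise hs hci hnulle (gamPow_smooth hs hv e.2.2.1)
        (gamPow_smooth hs hw e.2.2.2) hp hx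
      have hX1 := KEY1 e.2.2.1 e.2.2.2 (by omega)
      have hX2 := KEY2 e.2.2.1 e.2.2.2 (by omega)
      calc |e.1| * |NF e.2.1 (GamPow e.2.2.1 v) (GamPow e.2.2.2 w) p|
          ≤ |e.1| * (CtF ci e.2.1 *
              (Znorm ci (GamPow e.2.2.1 v) p *
                (∑ α : Fin 3, ∑ β : Fin 3, |pd α (pd β (GamPow e.2.2.2 w)) p|)
              + (∑ γ : Fin 3, |pd γ (GamPow e.2.2.1 v) p|) *
                (∑ γ : Fin 3, Znorm ci (pd γ (GamPow e.2.2.2 w)) p))) :=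
            mul_le_mul_of_nonneg_left hNFb (abs_nonneg _)
        _ ≤ |e.1| * (CtF ci e.2.1 * ((W1 e.2.2.2 + W2 e.2.2.1 e.2.2.2) * S)) := by
            refine mul_le_mul_of_nonneg_left
              (mul_le_mul_of_nonneg_left ?_ (CtF_nonneg hci _)) (abs_nonneg _)
            rw [add_mul]
            exact add_le_add hX1 hX2
        _ = (|e.1| * (CtF ci e.2.1 * (W1 e.2.2.2 + W2 e.2.2.1 e.2.2.2))) * S := by ring
    rw [one_mul] at h1
    exact h1
  calc ptNorm k (NF a v w) p
      ≤ ∑ a' ∈ MIdx k, lsum (Lst2 a')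
          (fun e => |e.1| * (CtF ci e.2.1 * (W1 e.2.2.2 + W2 e.2.2.1 e.2.2.2))) * S :=
        Finset.sum_le_sum hmain
    _ = C0 * S := by rw [hC0_def]; rw [Finset.sum_mul]
    _ ≤ (C0 + 1) * S := by nlinarith [hS0]
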